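/- arXiv:1903.12112 — 9 statements merged into one kernel-verified Lean document; each statement's English description precedes it below -/
import Mathlib

section
/- Let n be a positive integer and let F be a 2-regular graph on the vertex set Z_{2n} ∪ {∞} such that the multiset of differences ΔF = {x − y : {x,y} an edge of F with x,y ≠ ∞} contains every nonzero element of Z_{2n}, and such that F + n = F (where F + g is obtained by adding g to every vertex other than ∞). Then the family {F + g : g ∈ Z_{2n}} is an edge-decomposition of the complete graph K_{2n+1} on Z_{2n} ∪ {∞} into 2n copies of F; in particular every edge of K_{2n+1} lies in exactly one translate F + g. -/
/-!
Write `c = n`. Since `F + c = F`, the neighbours of `∞` form a pair `{a, a + c}`, and every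
edge `{x, y}` of `F` between finite vertices comes with the edge `{x + c, y + c}`, of the same
difference. As `F` has `2n + 1` edges, two of them at `∞`, there are exactly `2(2n - 1)` ordered
finite edges; each of the `2n - 1` nonzero differences occurs at least twice, so exactly twice.
Hence if an edge of `F` is mapped to an edge of `F` by a translation `h`, then `h ∈ {0, c}`, and
the translates `F + g` and `F + (g + c)` are the same graph.
-/

open Finset

def obTranslate {m : ℕ} (F : SimpleGraph (Option (ZMod m))) (g : ZMod m) :
    SimpleGraph (Option (ZMod m)) :=
  F.map (Equiv.optionCongr (Equiv.addRight g)).toEmbedding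

theorem Finset.card_fiber_eq_of_le_of_card_le {α β : Type*} [DecidableEq β] {s : Finset α}
    {t : Finset β} {f : α → β} {k : ℕ} (hf : Set.MapsTo f s t)
    (hk : ∀ b ∈ t, k ≤ #{a ∈ s | f a = b}) (hs : #s ≤ k * #t) :
    ∀ b ∈ t, #{a ∈ s | f a = b} = k := by
  have hsum : ∑ b ∈ t, #{a ∈ s | f a = b} = ∑ _b ∈ t, k := by
    refine le_antisymm ?_ (sum_le_sum hk)
    rw [← card_eq_sum_card_fiberwise hf, sum_const, smul_eq_mul, mul_comm]
    exact hs
  exact fun b hb => ((sum_eq_sum_iff_of_le hk).mp hsum.symm b hb).symm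

theorem Finset.eq_pair_of_card_le_two {α : Type*} [DecidableEq α] {s : Finset α} {a b : α}
    (ha : a ∈ s) (hb : b ∈ s) (hab : a ≠ b) (hs : #s ≤ 2) : s = {a, b} :=
  (eq_of_subset_of_card_le (insert_subset ha (singleton_subset_iff.mpr hb))
    (by rwa [card_pair hab])).symm

namespace SimpleGraph

variable {G : Type*}

def finiteArcs (F : SimpleGraph (Option G)) [Fintype G] [DecidableRel F.Adj] : Finset (G × G) :=
  {p | F.Adj (some p.1) (some p.2)}

variable {F : SimpleGraph (Option G)}

@[simp]
theorem mem_finiteArcs [Fintype G] [DecidableRel F.Adj] {p : G × G} :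
    p ∈ F.finiteArcs ↔ F.Adj (some p.1) (some p.2) := by
  simp [finiteArcs]

theorem card_finiteArcs_add_two [Fintype G] [DecidableRel F.Adj] (hF : F.IsRegularOfDegree 2) :
    #F.finiteArcs + 2 = 2 * Fintype.card G := by
  have hdeg (v : Option G) : ∑ w, (if F.Adj v w then 1 else 0) = 2 := by
    rw [← card_filter, ← neighborFinset_eq_filter, card_neighborFinset_eq_degree, hF v]
  have hnone : ∑ x : G, (if F.Adj (some x) none then 1 else 0) = 2 := by
    have h := hdeg none
    rw [Fintype.sum_option, if_neg (F.irrefl), zero_add] at h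
    simpa only [adj_comm] using h
  calc #F.finiteArcs + 2
      = ∑ x : G, ((if F.Adj (some x) none then 1 else 0)
          + ∑ y : G, if F.Adj (some x) (some y) then 1 else 0) := by
        rw [finiteArcs, card_filter, Fintype.sum_prod_type, sum_add_distrib, hnone, add_comm]
    _ = 2 * Fintype.card G := by
        rw [sum_congr rfl fun x _ => (Fintype.sum_option _).symm.trans (hdeg (some x)), sum_const,
          card_univ, smul_eq_mul, mul_comm]

variable [AddCommGroup G] {c : G}

theorem exists_neighborFinset_none_eq_pair [Fintype G] [DecidableEq G] [DecidableRel F.Adj]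
    (hF : F.IsRegularOfDegree 2) (hc0 : c ≠ 0)
    (hc : ∀ ⦃u v⦄, F.Adj u v → F.Adj (u.map (· + c)) (v.map (· + c))) :
    ∃ a, F.neighborFinset none = {some a, some (a + c)} := by
  obtain ⟨w, hw⟩ : (F.neighborFinset none).Nonempty := by
    rw [← card_pos, card_neighborFinset_eq_degree, hF none]
    exact two_pos
  rcases w with _ | a
  · exact absurd ((F.mem_neighborFinset _ _).mp hw) F.irrefl
  refine ⟨a, eq_pair_of_card_le_two hw ?_ (by simpa using hc0) ?_⟩
  · rw [mem_neighborFinset] at hw ⊢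
    exact hc hw
  · rw [card_neighborFinset_eq_degree, hF none]

theorem card_filter_finiteArcs_sub_eq_two [Fintype G] [DecidableEq G] [DecidableRel F.Adj]
    (hF : F.IsRegularOfDegree 2)
    (hdiff : ∀ d : G, d ≠ 0 → ∃ x y : G, F.Adj (some x) (some y) ∧ x - y = d)
    (hc0 : c ≠ 0) (hc : ∀ ⦃u v⦄, F.Adj u v → F.Adj (u.map (· + c)) (v.map (· + c)))
    {d : G} (hd : d ≠ 0) : #{p ∈ F.finiteArcs | p.1 - p.2 = d} = 2 := by
  have hmaps : Set.MapsTo (fun p : G × G => p.1 - p.2) F.finiteArcs (univ.erase (0 : G)) := by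
    intro p hp
    exact mem_erase.mpr ⟨sub_ne_zero.mpr fun e => F.ne_of_adj (mem_finiteArcs.mp hp)
      (congrArg some e), mem_univ _⟩
  have hk : ∀ e ∈ univ.erase (0 : G), 2 ≤ #{p ∈ F.finiteArcs | p.1 - p.2 = e} := by
    intro e he
    obtain ⟨a, b, hab, rfl⟩ := hdiff e (ne_of_mem_erase he)
    refine one_lt_card.mpr ⟨(a, b), ?_, (a + c, b + c), ?_, by simpa [Prod.ext_iff] using hc0⟩
    · exact mem_filter.mpr ⟨mem_finiteArcs.mpr hab, rfl⟩
    · exact mem_filter.mpr ⟨mem_finiteArcs.mpr (hc hab), add_sub_add_right_eq_sub a b c⟩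
  have hcard : #F.finiteArcs ≤ 2 * #(univ.erase (0 : G)) := by
    have := card_finiteArcs_add_two hF
    rw [card_erase_of_mem (mem_univ _), card_univ]
    omega
  exact card_fiber_eq_of_le_of_card_le hmaps hk hcard d (mem_erase.mpr ⟨hd, mem_univ d⟩)

theorem eq_or_eq_add_of_adj_some_of_sub_eq [Fintype G] [DecidableEq G] [DecidableRel F.Adj]
    (hF : F.IsRegularOfDegree 2)
    (hdiff : ∀ d : G, d ≠ 0 → ∃ x y : G, F.Adj (some x) (some y) ∧ x - y = d)
    (hc0 : c ≠ 0) (hc : ∀ ⦃u v⦄, F.Adj u v → F.Adj (u.map (· + c)) (v.map (· + c)))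
    {x y x' y' : G} (h : F.Adj (some x) (some y)) (h' : F.Adj (some x') (some y'))
    (hd : x' - y' = x - y) : x' = x ∨ x' = x + c := by
  have hxy : x - y ≠ 0 := sub_ne_zero.mpr fun e => F.ne_of_adj h (congrArg some e)
  have hpair : {p ∈ F.finiteArcs | p.1 - p.2 = x - y} = {(x, y), (x + c, y + c)} :=
    eq_pair_of_card_le_two (mem_filter.mpr ⟨mem_finiteArcs.mpr h, rfl⟩)
      (mem_filter.mpr ⟨mem_finiteArcs.mpr (hc h), add_sub_add_right_eq_sub x y c⟩)
      (by simpa [Prod.ext_iff] using hc0)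
      (card_filter_finiteArcs_sub_eq_two hF hdiff hc0 hc hxy).le
  have hmem : (x', y') ∈ {p ∈ F.finiteArcs | p.1 - p.2 = x - y} :=
    mem_filter.mpr ⟨mem_finiteArcs.mpr h', hd⟩
  rw [hpair] at hmem
  simp only [mem_insert, mem_singleton, Prod.mk.injEq] at hmem
  exact hmem.imp And.left And.left

theorem eq_or_eq_add_of_adj_map_sub [Fintype G] [DecidableEq G] [DecidableRel F.Adj]
    (hF : F.IsRegularOfDegree 2)
    (hdiff : ∀ d : G, d ≠ 0 → ∃ x y : G, F.Adj (some x) (some y) ∧ x - y = d)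
    (hc0 : c ≠ 0) (hc2 : c + c = 0)
    (hc : ∀ ⦃u v⦄, F.Adj u v → F.Adj (u.map (· + c)) (v.map (· + c)))
    {u v : Option G} {g g' : G} (hg : F.Adj (u.map (· - g)) (v.map (· - g)))
    (hg' : F.Adj (u.map (· - g')) (v.map (· - g'))) : g' = g ∨ g' = g + c := by
  obtain ⟨a, ha⟩ := exists_neighborFinset_none_eq_pair hF hc0 hc
  have hnone {y : G} (hy : F.Adj none (some y)) : y = a ∨ y = a + c := by
    simpa [ha] using (F.mem_neighborFinset _ _).mpr hy
  have hinfty {y : G} (hy : F.Adj none (some (y - g))) (hy' : F.Adj none (some (y - g'))) :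
      g' = g ∨ g' = g + c := by
    rcases hnone hy with h | h <;> rcases hnone hy' with h' | h'
    · exact .inl (by linear_combination (norm := module) h - h')
    · exact .inr (by linear_combination (norm := module) h - h' - hc2)
    · exact .inr (by linear_combination (norm := module) h - h')
    · exact .inl (by linear_combination (norm := module) h - h')
  rcases u with _ | x <;> rcases v with _ | y
  · exact absurd hg F.irrefl
  · exact hinfty hg hg'
  · exact hinfty hg.symm hg'.symm
  · rcases eq_or_eq_add_of_adj_some_of_sub_eq hF hdiff hc0 hc hg hg'
      (by simp only [sub_sub_sub_cancel_right]) with h | h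
    · exact .inl (by linear_combination (norm := module) -h)
    · exact .inr (by linear_combination (norm := module) -h - hc2)

end SimpleGraph

section obTranslate

variable {m : ℕ} {F : SimpleGraph (Option (ZMod m))}

theorem obTranslate_adj {g : ZMod m} {u v : Option (ZMod m)} :
    (obTranslate F g).Adj u v ↔ F.Adj (u.map (· - g)) (v.map (· - g)) := by
  have hu : u = Equiv.optionCongr (Equiv.addRight g) (u.map (· - g)) := by cases u <;> simp
  have hv : v = Equiv.optionCongr (Equiv.addRight g) (v.map (· - g)) := by cases v <;> simp
  conv_lhs => rw [hu, hv]
  exact SimpleGraph.map_adj_apply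

theorem adj_map_add_of_obTranslate_eq_self {c : ZMod m} (hFc : obTranslate F c = F)
    ⦃u v : Option (ZMod m)⦄ (h : F.Adj u v) : F.Adj (u.map (· + c)) (v.map (· + c)) := by
  rw [← hFc]
  exact SimpleGraph.map_adj_apply.mpr h

theorem obTranslate_add (a b : ZMod m) :
    obTranslate F (a + b) = obTranslate (obTranslate F a) b := by
  ext u v
  rw [obTranslate_adj, obTranslate_adj, obTranslate_adj]
  cases u <;> cases v <;> simp [sub_sub, add_comm a b]

theorem exists_obTranslate_adj
    (hdiff : ∀ d : ZMod m, d ≠ 0 → ∃ x y : ZMod m, F.Adj (some x) (some y) ∧ x - y = d)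
    {a : ZMod m} (ha : F.Adj none (some a)) {u v : Option (ZMod m)} (huv : u ≠ v) :
    ∃ g, (obTranslate F g).Adj u v := by
  simp_rw [obTranslate_adj]
  rcases u with _ | x <;> rcases v with _ | y
  · exact absurd rfl huv
  · exact ⟨y - a, by simpa using ha⟩
  · exact ⟨x - a, by simpa using ha.symm⟩
  · obtain ⟨p, q, hpq, hd⟩ := hdiff (x - y) (sub_ne_zero.mpr fun e => huv (congrArg some e))
    refine ⟨x - p, ?_⟩
    convert hpq using 2 <;> simp only [Option.map_some, Option.some.injEq]
    · abel
    · linear_combination hd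

end obTranslate

theorem stmt0 (n : ℕ) (hn : 0 < n) (F : SimpleGraph (Option (ZMod (2 * n))))
    (hreg : ∀ v, (F.neighborSet v).ncard = 2)
    (hdiff : ∀ d : ZMod (2 * n), d ≠ 0 →
      ∃ x y : ZMod (2 * n), F.Adj (some x) (some y) ∧ x - y = d)
    (hinv : obTranslate F (n : ZMod (2 * n)) = F) :
    ∀ u v : Option (ZMod (2 * n)), u ≠ v →
      (∃ g : ZMod (2 * n), (obTranslate F g).Adj u v) ∧
      (∀ g g' : ZMod (2 * n), (obTranslate F g).Adj u v → (obTranslate F g').Adj u v →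
        obTranslate F g = obTranslate F g') := by
  classical
  have : NeZero (2 * n) := ⟨by omega⟩
  have hF : F.IsRegularOfDegree 2 := fun v => by
    rw [← SimpleGraph.card_neighborSet_eq_degree, ← Nat.card_eq_fintype_card,
      Nat.card_coe_set_eq, hreg v]
  have hc0 : (n : ZMod (2 * n)) ≠ 0 := by
    rw [Ne, ZMod.natCast_eq_zero_iff]
    exact fun h => absurd (Nat.le_of_dvd hn h) (by omega)
  have hc2 : (n : ZMod (2 * n)) + n = 0 := by
    rw [← Nat.cast_add, ← two_mul, ZMod.natCast_self]
  have hc := adj_map_add_of_obTranslate_eq_self hinv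
  obtain ⟨a, ha⟩ := SimpleGraph.exists_neighborFinset_none_eq_pair hF hc0 hc
  have hna : F.Adj none (some a) := (F.mem_neighborFinset _ _).mp (by simp [ha])
  intro u v huv
  refine ⟨exists_obTranslate_adj hdiff hna huv, fun g g' hg hg' => ?_⟩
  rw [obTranslate_adj] at hg hg'
  rcases SimpleGraph.eq_or_eq_add_of_adj_map_sub hF hdiff hc0 hc2 hc hg hg' with rfl | rfl
  · rfl
  · rw [add_comm, obTranslate_add, hinv]
end

section
/- Let x be an element of Z_{2n} of order u with u ≡ 2 (mod 4), and define G = {2x·i + j : 0 ≤ i ≤ u/2 − 1, 0 ≤ j ≤ 2n/u − 1} ⊆ Z_{2n}. Then both {G, G + x} and {G, G + n} are partitions of Z_{2n}, i.e., Z_{2n} is the disjoint union of G and G + x, and also the disjoint union of G and G + n. -/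
/-!
Let `u` be the order of `x` and `m = 2n/u`. Writing `x = m t` with `t` coprime to `u`, the
elements `2i • x` for `i < u/2` run over all multiples of `2m`, so `G` is the set of residues
whose remainder modulo `2m` lies in `[0, m)`. Both `x` and `n` have remainder `m` modulo `2m`
(as `t` and `u/2` are odd), so translating by either swaps `G` with its complement.
-/

open Set

lemma Nat.exists_lt_mul_modEq_of_coprime {t w : ℕ} (hw : 0 < w) (ht : t.Coprime w) (q : ℕ) :
    ∃ i < w, t * i ≡ q [MOD w] := by
  have : NeZero w := ⟨hw.ne'⟩
  refine ⟨((t : ZMod w)⁻¹ * q).val, ZMod.val_lt _, ?_⟩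
  rw [← ZMod.natCast_eq_natCast_iff]
  push_cast
  rw [ZMod.natCast_zmod_val, ← mul_assoc, ZMod.coe_mul_inv_eq_one t ht, one_mul]

lemma Nat.add_mod_two_mul_lt_iff {m a b : ℕ} (hm : 0 < m) (hb : b % (2 * m) = m) :
    (a + b) % (2 * m) < m ↔ ¬ a % (2 * m) < m := by
  have ha := Nat.mod_lt a (show 0 < 2 * m by omega)
  rw [Nat.add_mod_eq_ite, hb]
  split_ifs <;> omega

lemma Set.image_add_right_eq_compl {A : Type*} [AddGroup A] {S : Set A} {s : A}
    (h : ∀ z, z + s ∈ S ↔ z ∉ S) : (fun a => a + s) '' S = Sᶜ := by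
  ext z
  rw [image_add_right, mem_preimage, mem_compl_iff, iff_not_comm, ← h, neg_add_cancel_right]

namespace ZMod

variable {N : ℕ} [NeZero N]

lemma div_addOrderOf_mul_addOrderOf (x : ZMod N) : N / addOrderOf x * addOrderOf x = N :=
  Nat.div_mul_cancel (by simpa using addOrderOf_dvd_natCard x)

lemma exists_val_eq_mul_coprime_addOrderOf (x : ZMod N) :
    ∃ t, x.val = N / addOrderOf x * t ∧ t.Coprime (addOrderOf x) := by
  have hN := NeZero.ne N
  have hord := addOrderOf_coe x.val hN
  rw [natCast_zmod_val] at hord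
  rw [hord, Nat.div_div_self (Nat.gcd_dvd_left N x.val) hN]
  exact ⟨x.val / N.gcd x.val, (Nat.mul_div_cancel' (Nat.gcd_dvd_right N x.val)).symm,
    (Nat.coprime_div_gcd_div_gcd (Nat.gcd_pos_of_pos_left _ (Nat.pos_of_ne_zero hN))).symm⟩

/-- For `k = 2` this is the set `G` of the paper. -/
def intervalTranslates (x : ZMod N) (k : ℕ) : Set (ZMod N) :=
  {z | ∃ i j : ℕ, i < addOrderOf x / k ∧ j < N / addOrderOf x ∧ z = (k * i) • x + (j : ZMod N)}

lemma mem_intervalTranslates_iff {x : ZMod N} {k : ℕ} (hk : k ∣ addOrderOf x) {z : ZMod N} :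
    z ∈ intervalTranslates x k ↔ z.val % (k * (N / addOrderOf x)) < N / addOrderOf x := by
  obtain ⟨t, hxt, hcop⟩ := exists_val_eq_mul_coprime_addOrderOf x
  have hmu := div_addOrderOf_mul_addOrderOf x
  set m := N / addOrderOf x
  obtain ⟨w, hw⟩ := hk
  have hk0 : 0 < k := Nat.pos_of_ne_zero <| by
    rintro rfl
    exact (addOrderOf_pos x).ne' (by rw [hw, zero_mul])
  have hN : N = k * m * w := by rw [← hmu, hw]; ring
  have hw0 : 0 < w := Nat.pos_of_ne_zero fun h => NeZero.ne N (by rw [hN, h]; simp)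
  have hcast : ∀ i j : ℕ, (k * i) • x + (j : ZMod N) = ((k * m * (t * i) + j : ℕ) : ZMod N) := by
    intro i j
    rw [nsmul_eq_mul, ← natCast_zmod_val x, hxt]
    push_cast
    ring
  constructor
  · rintro ⟨i, j, -, hj, rfl⟩
    rw [hcast, val_natCast, Nat.mod_mod_of_dvd _ (hN ▸ dvd_mul_right _ _), Nat.mul_add_mod,
      Nat.mod_eq_of_lt (hj.trans_le (Nat.le_mul_of_pos_left m hk0))]
    exact hj
  · intro hz
    obtain ⟨i, hi, hti⟩ := Nat.exists_lt_mul_modEq_of_coprime hw0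
      (hcop.coprime_dvd_right ⟨k, by rw [hw, mul_comm]⟩) (z.val / (k * m))
    have hmod : z.val ≡ k * m * (t * i) + z.val % (k * m) [MOD k * m * w] :=
      calc z.val = k * m * (z.val / (k * m)) + z.val % (k * m) := (Nat.div_add_mod _ _).symm
        _ ≡ k * m * (t * i) + z.val % (k * m) [MOD k * m * w] :=
          (hti.symm.mul_left' (k * m)).add_right _
    refine ⟨i, z.val % (k * m), by rwa [hw, Nat.mul_div_cancel_left _ hk0], hz, ?_⟩
    calc z = (z.val : ZMod N) := (natCast_zmod_val z).symm
      _ = _ := by rw [hcast, natCast_eq_natCast_iff]; exact hmod.of_dvd (dvd_of_eq hN)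

lemma image_add_right_eq_compl_of_val_mod_eq {m : ℕ} (hm : 0 < m) (hmN : 2 * m ∣ N) {s : ZMod N}
    (hs : s.val % (2 * m) = m) :
    (fun a => a + s) '' {z : ZMod N | z.val % (2 * m) < m} = {z | z.val % (2 * m) < m}ᶜ :=
  Set.image_add_right_eq_compl fun z => by
    rw [mem_ofPred_eq, val_add, Nat.mod_mod_of_dvd _ hmN]
    exact Nat.add_mod_two_mul_lt_iff hm hs

end ZMod

theorem stmt1 (n : ℕ) (hn : 0 < n) (x : ZMod (2 * n))
    (hu : addOrderOf x % 4 = 2)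
    (G : Set (ZMod (2 * n)))
    (hG : G = {z | ∃ i j : ℕ, i < addOrderOf x / 2 ∧ j < 2 * n / addOrderOf x ∧
      z = (2 * i) • x + (j : ZMod (2 * n))}) :
    (G ∪ (fun a => a + x) '' G = Set.univ ∧ Disjoint G ((fun a => a + x) '' G)) ∧
    (G ∪ (fun a => a + (n : ZMod (2 * n))) '' G = Set.univ ∧
      Disjoint G ((fun a => a + (n : ZMod (2 * n))) '' G)) := by
  have : NeZero (2 * n) := ⟨by omega⟩
  have hmu := ZMod.div_addOrderOf_mul_addOrderOf x
  obtain ⟨t, hxt, hcop⟩ := ZMod.exists_val_eq_mul_coprime_addOrderOf x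
  set m := 2 * n / addOrderOf x
  have hu2 : addOrderOf x = 2 * (addOrderOf x / 2) := by omega
  have hnm : n = m * (addOrderOf x / 2) := by rw [hu2] at hmu; linarith
  have hm : 0 < m := Nat.pos_of_ne_zero fun h => by rw [h] at hnm; omega
  have hmN : 2 * m ∣ 2 * n := ⟨_, by rw [mul_assoc, ← hnm]⟩
  have hGm : G = {z | z.val % (2 * m) < m} := by
    ext z
    exact hG ▸ ZMod.mem_intervalTranslates_iff ⟨_, hu2⟩
  have hpartition : ∀ s : ZMod (2 * n), s.val % (2 * m) = m →
      G ∪ (fun a => a + s) '' G = univ ∧ Disjoint G ((fun a => a + s) '' G) := fun s hs => by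
    rw [hGm, ZMod.image_add_right_eq_compl_of_val_mod_eq hm hmN hs]
    exact ⟨union_compl_self _, disjoint_compl_right⟩
  have ht : t % 2 = 1 := Nat.odd_iff.mp (hcop.coprime_dvd_right ⟨_, hu2⟩).odd_of_right
  refine ⟨hpartition x ?_, hpartition n ?_⟩
  · rw [hxt, mul_comm 2, Nat.mul_mod_mul_left, ht, mul_one]
  · have hnmod : m * (addOrderOf x / 2) % (m * 2) = m := by
      rw [Nat.mul_mod_mul_left, show addOrderOf x / 2 % 2 = 1 by omega, mul_one]
    rwa [ZMod.val_natCast, Nat.mod_mod_of_dvd _ hmN, mul_comm 2, hnm]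
end

section
/- Let n be odd and suppose D_1, …, D_{s+t} are multisets of elements of Z_{2n} with |D_i| = m_i, Σ m_i = n − 1, such that the disjoint union of the ±D_i equals Z_{2n} \ {0, n} (each element exactly once), and such that Σ_{d ∈ D_i} d = n for 1 ≤ i ≤ s and Σ_{d ∈ D_i} d = 0 for s+1 ≤ i ≤ s+t. Then s·n ≡ ⌊n/2⌋ (mod 2); in particular, since n is odd, s ≡ (n−1)/2 (mod 2). -/
/-!
Reduce everything modulo 2 through the parity map `ℤ/2n → ℤ/2`, which kills negation. The parity
of `Σ_{d ∈ ∪ D_i} d = s n` is the number of odd elements of `∪ D_i`. Each odd element of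
`ℤ/2n ∖ {0, n}` lies in exactly one of `∪ D_i` and `-∪ D_i`, and there are `n - 1` of them
(`n` itself is odd), so `∪ D_i` contains `(n - 1) / 2` odd elements.
-/

open Finset

theorem Multiset.sum_map_zmod_two_eq_card_filter {α : Type*} (f : α → ZMod 2) (M : Multiset α) :
    (M.map f).sum = (card (M.filter (f · = 1)) : ZMod 2) := by
  induction M using Multiset.induction_on with
  | empty => simp
  | cons a M ih =>
    rw [Multiset.map_cons, Multiset.sum_cons, ih]
    by_cases ha : f a = 1
    · rw [Multiset.filter_cons_of_pos M ha, Multiset.card_cons, Nat.cast_succ, ha, add_comm]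
    · have ha0 : f a = 0 := by generalize f a = b at ha; revert b; decide
      rw [Multiset.filter_cons_of_neg M ha, ha0, zero_add]

theorem AddMonoidHom.two_mul_card_filter_eq_one {G : Type*} [AddGroup G] [Fintype G]
    (φ : G →+ ZMod 2) {g : G} (hg : φ g = 1) :
    2 * #{x | φ x = 1} = Fintype.card G := by
  have htranslate : #{x | φ x = 0} = #{x | φ x = 1} := by
    refine card_bij' (fun x _ => x + g) (fun x _ => x - g) ?_ ?_ (by simp) (by simp) <;>
      simp only [mem_filter, mem_univ, true_and, map_add, map_sub, hg] <;>
      intro x hx <;> rw [hx] <;> rfl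
  have hsplit : #{x | φ x = 0} + #{x | φ x = 1} = Fintype.card G := by
    have hne : ∀ a : ZMod 2, ¬a = 0 ↔ a = 1 := by decide
    rw [← card_univ, ← card_filter_add_card_filter_not (s := univ) (fun x => φ x = 0)]
    simp only [hne]
  omega

namespace ZMod

def parityHom (n : ℕ) : ZMod (2 * n) →+* ZMod 2 :=
  castHom (dvd_mul_right 2 n) (ZMod 2)

theorem parityHom_natCast_of_odd {n : ℕ} (hn : Odd n) : parityHom n n = 1 := by
  rw [map_natCast, natCast_eq_one_iff_odd]
  exact hn

theorem parityHom_neg {n : ℕ} (x : ZMod (2 * n)) : parityHom n (-x) = parityHom n x := by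
  rw [map_neg, neg_eq_self_mod_two]

theorem card_filter_parityHom_eq_one (n : ℕ) [NeZero n] : #{x | parityHom n x = 1} = n := by
  have h2 : 2 * #{x | parityHom n x = 1} = Fintype.card (ZMod (2 * n)) :=
    (parityHom n).toAddMonoidHom.two_mul_card_filter_eq_one (map_one (parityHom n))
  rw [ZMod.card] at h2
  omega

theorem card_filter_parityHom_eq_one_of_count {n : ℕ} (hn : Odd n) {N : Multiset (ZMod (2 * n))}
    (hN : ∀ z, N.count z = if z = 0 ∨ z = (n : ZMod (2 * n)) then 0 else 1) :
    Multiset.card (N.filter (parityHom n · = 1)) = n - 1 := by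
  have : NeZero n := ⟨hn.pos.ne'⟩
  have hN_eq : N = (univ \ {0, (n : ZMod (2 * n))}).val := by
    ext z
    rw [hN, Multiset.count_eq_of_nodup (univ \ _).nodup]
    simp only [mem_val, mem_sdiff, mem_univ, mem_insert, mem_singleton, true_and]
    split_ifs <;> tauto
  have herase : {x ∈ univ \ {0, (n : ZMod (2 * n))} | parityHom n x = 1}
      = ({x | parityHom n x = 1} : Finset _).erase (n : ZMod (2 * n)) := by
    ext x
    by_cases hx : x = 0 <;> simp [hx]
  rw [hN_eq, ← filter_val, card_val, herase, card_erase_of_mem, card_filter_parityHom_eq_one]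
  simpa using parityHom_natCast_of_odd hn

end ZMod

theorem stmt6_general (n s t : ℕ) (hn : Odd n)
    (D : Fin (s + t) → Multiset (ZMod (2 * n)))
    -- the disjoint union of the `±D_i` is `Z_{2n} \ {0, n}`, each element exactly once
    (hcover : ∀ z : ZMod (2 * n),
      Multiset.count z (∑ i, ((D i) + (D i).map (fun d => -d)))
        = if z = 0 ∨ z = (n : ZMod (2 * n)) then 0 else 1)
    (hS : ∀ i : Fin (s + t), (i : ℕ) < s → (D i).sum = (n : ZMod (2 * n)))
    (hT : ∀ i : Fin (s + t), s ≤ (i : ℕ) → (D i).sum = 0) :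
    s * n ≡ n / 2 [MOD 2] ∧ s ≡ (n - 1) / 2 [MOD 2] := by
  set M := ∑ i, D i
  have hpm : ∑ i, ((D i) + (D i).map (fun d => -d)) = M + M.map (fun d => -d) := by
    rw [sum_add_distrib]
    congr 1
    exact (map_sum (Multiset.mapAddMonoidHom _) D univ).symm
  have hsum : M.sum = (s * n : ℕ) := by
    rw [Multiset.sum_sum, Fin.sum_univ_add]
    simp [hS, hT]
  have hodd : 2 * Multiset.card (M.filter (ZMod.parityHom n · = 1)) = n - 1 := by
    rw [← ZMod.card_filter_parityHom_eq_one_of_count hn (hpm ▸ hcover), Multiset.filter_add,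
      Multiset.card_add, Multiset.filter_map, Multiset.card_map, two_mul]
    simp only [Function.comp_def, ZMod.parityHom_neg]
  have hpar : ((s * n : ℕ) : ZMod 2) = Multiset.card (M.filter (ZMod.parityHom n · = 1)) := by
    rw [← map_natCast (ZMod.parityHom n), ← hsum, map_multiset_sum,
      Multiset.sum_map_zmod_two_eq_card_filter]
  rw [ZMod.natCast_eq_natCast_iff'] at hpar
  obtain ⟨k, rfl⟩ := hn
  have hsk : s * (2 * k + 1) = 2 * (s * k) + s := by ring
  constructor <;> unfold Nat.ModEq <;> omega

theorem stmt6 (n s t : ℕ) (hn : Odd n) (hn0 : 0 < n)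
    (D : Fin (s + t) → Multiset (ZMod (2 * n)))
    (m : Fin (s + t) → ℕ) (hm : ∀ i, m i = (D i).card)
    (hsum : ∑ i, m i = n - 1)
    -- the disjoint union of the `±D_i` is `Z_{2n} \ {0, n}`, each element exactly once
    (hcover : ∀ z : ZMod (2 * n),
      Multiset.count z (∑ i, ((D i) + (D i).map (fun d => -d)))
        = if z = 0 ∨ z = (n : ZMod (2 * n)) then 0 else 1)
    (hS : ∀ i : Fin (s + t), (i : ℕ) < s → (D i).sum = (n : ZMod (2 * n)))
    (hT : ∀ i : Fin (s + t), s ≤ (i : ℕ) → (D i).sum = 0) :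
    s * n ≡ n / 2 [MOD 2] ∧ s ≡ (n - 1) / 2 [MOD 2] :=
  stmt6_general n s t hn D hcover hS hT
end

section
/- Let F be a 2-regular graph of order 2n+1 on vertex set Z_{2n} ∪ {∞} with ΔF ⊇ Z_{2n} \ {0}, F + n = F, whose cycle through ∞ has length 3, and let r be the number of even-length cycles of F. Then either n ≡ 0 (mod 4), or (n−1)/2 + r is an even integer. -/
open Finset Function

lemma Finset.sum_eq_sum_filter_of_involution {α M : Type*} [DecidableEq α] [AddCommMonoid M]
    {s : Finset α} {g : α → α} {h : α → M} (hmem : ∀ a ∈ s, g a ∈ s)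
    (hinv : ∀ a ∈ s, g (g a) = a) (hcancel : ∀ a ∈ s, g a ≠ a → h a + h (g a) = 0) :
    ∑ a ∈ s, h a = ∑ a ∈ s with g a = a, h a := by
  rw [← sum_filter_add_sum_filter_not s (fun a => g a = a), sum_involution (fun a _ => g a)
    (fun a ha => ?_) (fun a ha _ => (mem_filter.mp ha).2) (fun a ha => ?_)
    (fun a ha => hinv a (mem_filter.mp ha).1), add_zero]
  · exact hcancel a (mem_filter.mp ha).1 (mem_filter.mp ha).2
  · obtain ⟨has, hga⟩ := mem_filter.mp ha
    exact mem_filter.mpr ⟨hmem a has, fun h => hga (by rw [← h, hinv a has])⟩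

lemma Finset.even_card_of_involution {α : Type*} {s : Finset α} {g : α → α}
    (hmem : ∀ a ∈ s, g a ∈ s) (hinv : ∀ a ∈ s, g (g a) = a)
    (hne : ∀ a ∈ s, g a ≠ a) : Even #s := by
  classical
  rw [← ZMod.natCast_eq_zero_iff_even, card_eq_sum_ones, Nat.cast_sum, Nat.cast_one,
    sum_eq_sum_filter_of_involution hmem hinv fun _ _ _ => by decide, filter_false_of_mem hne,
    sum_empty]

lemma ZMod.natCast_card_filter_range_ne_succ (g : ℕ → ZMod 2) (N : ℕ) :
    (#{i ∈ range N | g i ≠ g (i + 1)} : ZMod 2) = g N - g 0 := by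
  rw [card_filter, Nat.cast_sum, ← sum_range_sub]
  refine sum_congr rfl fun i _ => ?_
  generalize g i = a
  generalize g (i + 1) = b
  revert a b
  decide

lemma Finset.card_filter_sub_eq_two {A : Type*} [AddCommGroup A] [Fintype A] [DecidableEq A]
    {P : Finset (A × A)} (hdiag : ∀ z ∈ P, z.1 ≠ z.2) (hcard : #P = 2 * (Fintype.card A - 1))
    (hge : ∀ δ ≠ 0, 2 ≤ #{z ∈ P | z.1 - z.2 = δ}) {δ : A} (hδ : δ ≠ 0) :
    #{z ∈ P | z.1 - z.2 = δ} = 2 := by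
  have hmaps : ∀ z ∈ P, z.1 - z.2 ∈ univ.erase (0 : A) := fun z hz =>
    mem_erase.mpr ⟨sub_ne_zero.mpr (hdiag z hz), mem_univ _⟩
  have hsum : ∑ _δ ∈ univ.erase (0 : A), 2 =
      ∑ δ ∈ univ.erase (0 : A), #{z ∈ P | z.1 - z.2 = δ} := by
    rw [← card_eq_sum_card_fiberwise hmaps, hcard, sum_const, card_erase_of_mem (mem_univ _),
      card_univ, smul_eq_mul, mul_comm]
  exact ((sum_eq_sum_iff_of_le fun δ hδ => hge δ (ne_of_mem_erase hδ)).mp hsum δ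
    (mem_erase.mpr ⟨hδ, mem_univ _⟩)).symm

lemma Finset.card_filter_sub_eq_two_mul {A : Type*} [AddCommGroup A] [Fintype A] [DecidableEq A]
    {P : Finset (A × A)} (hfib : ∀ δ ≠ 0, #{z ∈ P | z.1 - z.2 = δ} = 2) (Q : A → Prop)
    [DecidablePred Q] (hQ : ¬ Q 0) : #{z ∈ P | Q (z.1 - z.2)} = 2 * #{δ | Q δ} := by
  rw [card_eq_sum_card_fiberwise (f := fun z => z.1 - z.2) (t := {δ | Q δ})
    fun z hz => by simpa using (mem_filter.mp hz).2, mul_comm, ← smul_eq_mul, ← sum_const]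
  refine sum_congr rfl fun δ hδ => ?_
  have hQδ : Q δ := (mem_filter.mp hδ).2
  rw [filter_filter, ← hfib δ fun h => hQ (h ▸ hQδ)]
  congr 1
  exact filter_congr fun z _ => ⟨fun h => h.2, fun h => ⟨h ▸ hQδ, h⟩⟩

namespace SimpleGraph

lemma card_adj_some_add_four {α : Type*} [Fintype α] {G : SimpleGraph (Option α)}
    [DecidableRel G.Adj] (hG : ∀ v, (G.neighborSet v).ncard = 2) :
    #{z : α × α | G.Adj (some z.1) (some z.2)} + 4 = 2 * (Fintype.card α + 1) := by
  have hdeg : ∀ v, ∑ w, (if G.Adj v w then 1 else 0) = 2 := fun v => by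
    rw [← card_filter, ← hG v, Set.ncard_eq_toFinset_card']
    congr 1
    ext w
    simp
  have hnone : ∑ x : α, (if G.Adj (some x) none then 1 else 0) = 2 := by
    have h := hdeg none
    rw [Fintype.sum_option, if_neg G.irrefl, zero_add] at h
    rw [← h]
    exact sum_congr rfl fun x _ => by simp only [adj_comm]
  have htotal := sum_congr rfl fun v (_ : v ∈ univ) => hdeg v
  rw [sum_const, card_univ, Fintype.card_option, smul_eq_mul, Fintype.sum_option, hdeg] at htotal
  simp only [Fintype.sum_option, sum_add_distrib, hnone] at htotal
  rw [card_filter, Fintype.sum_prod_type]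
  dsimp only
  omega

variable {V : Type*} {G : SimpleGraph V}

lemma Iso.involutive_connectedComponentEquiv {φ : G ≃g G} (hφ : Involutive φ) :
    Involutive φ.connectedComponentEquiv :=
  fun C => C.ind fun v => congrArg G.connectedComponentMk (hφ v)

namespace IsCycles

variable (hG : G.IsCycles)

noncomputable def nextDart (d : G.Dart) : G.Dart where
  toProd := (d.snd, (hG.other_adj_of_adj d.adj.symm).choose)
  adj := (hG.other_adj_of_adj d.adj.symm).choose_spec.2

@[simp]
lemma nextDart_fst (d : G.Dart) : (hG.nextDart d).fst = d.snd := rfl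

lemma fst_ne_nextDart_snd (d : G.Dart) : d.fst ≠ (hG.nextDart d).snd :=
  (hG.other_adj_of_adj d.adj.symm).choose_spec.1

lemma eq_nextDart_or_eq_symm {d e : G.Dart} (h : e.fst = d.snd) :
    e = hG.nextDart d ∨ e = d.symm := by
  by_cases he : e.snd = d.fst
  · exact Or.inr (Dart.ext _ _ (Prod.ext h he))
  · refine Or.inl (Dart.ext _ _ (Prod.ext h ?_))
    have hadj : G.Adj d.snd e.snd := h ▸ e.adj
    exact (hG.existsUnique_ne_adj d.adj.symm).unique ⟨Ne.symm he, hadj⟩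
      ⟨hG.fst_ne_nextDart_snd d, (hG.nextDart d).adj⟩

lemma nextDart_symm_nextDart (d : G.Dart) : hG.nextDart (hG.nextDart d).symm = d.symm := by
  refine ((hG.eq_nextDart_or_eq_symm (d := (hG.nextDart d).symm) (e := d.symm) rfl).resolve_right
    fun h => ?_).symm
  exact hG.fst_ne_nextDart_snd d (congrArg (·.snd) h)

lemma iterate_nextDart_symm (m : ℕ) (d : G.Dart) :
    hG.nextDart^[m] (hG.nextDart^[m] d).symm = d.symm := by
  induction m generalizing d with
  | zero => rfl
  | succ m ih =>
    rw [iterate_succ_apply, iterate_succ_apply', hG.nextDart_symm_nextDart, ih]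

lemma nextDart_injective : Injective hG.nextDart := fun a b h =>
  Dart.symm_involutive.injective <| (hG.nextDart_symm_nextDart a).symm.trans
    ((congrArg (fun d => hG.nextDart d.symm) h).trans (hG.nextDart_symm_nextDart b))

lemma map_nextDart (φ : G ≃g G) (d : G.Dart) :
    hG.nextDart (φ.toHom.mapDart d) = φ.toHom.mapDart (hG.nextDart d) := by
  refine ((hG.eq_nextDart_or_eq_symm (e := φ.toHom.mapDart (hG.nextDart d)) rfl).resolve_right
    fun h => hG.fst_ne_nextDart_snd d ?_).symm
  exact φ.injective (congrArg (·.snd) h).symm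

/-- Reversing darts inverts `nextDart` (`iterate_nextDart_symm`), so `τ` acts on the orbit of `d`
as the reflection `i ↦ j - i`, which fixes an index or swaps two consecutive ones. -/
lemma exists_apply_iterate_eq_symm {τ : G.Dart → G.Dart} (hτ : Function.Commute τ hG.nextDart)
    {d : G.Dart} {j : ℕ} (h : τ d = (hG.nextDart^[j] d).symm) :
    ∃ m, τ (hG.nextDart^[m] d) = (hG.nextDart^[m] d).symm ∨
      τ (hG.nextDart^[m] d) = (hG.nextDart^[m + 1] d).symm := by
  have hsplit : hG.nextDart^[j] d = hG.nextDart^[j / 2] (hG.nextDart^[j / 2 + j % 2] d) := by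
    rw [← iterate_add_apply]
    congr 1
    omega
  have key : τ (hG.nextDart^[j / 2] d) = (hG.nextDart^[j / 2 + j % 2] d).symm := by
    rw [(hτ.iterate_right _).eq, h, hsplit, hG.iterate_nextDart_symm]
  refine ⟨j / 2, ?_⟩
  rcases Nat.mod_two_eq_zero_or_one j with hj | hj <;> rw [hj] at key
  · exact Or.inl key
  · exact Or.inr key

lemma minimalPeriod_nextDart_pos [Fintype V] [DecidableRel G.Adj] (d : G.Dart) :
    0 < minimalPeriod hG.nextDart d :=
  minimalPeriod_pos_of_mem_periodicPts (hG.nextDart_injective.mem_periodicPts d)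

section Orbit

variable [DecidableEq V]

noncomputable def orbit (d : G.Dart) : Finset G.Dart :=
  (range (minimalPeriod hG.nextDart d)).image (hG.nextDart^[·] d)

variable {hG} {d e : G.Dart}

lemma card_filter_orbit (p : G.Dart → Prop) [DecidablePred p] :
    #{e ∈ hG.orbit d | p e} =
      #{i ∈ range (minimalPeriod hG.nextDart d) | p (hG.nextDart^[i] d)} := by
  rw [orbit, filter_image, card_image_of_injOn]
  exact iterate_injOn_Iio_minimalPeriod.mono fun i hi => by
    simpa using (mem_filter.mp hi).1

variable [Fintype V] [DecidableRel G.Adj]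

lemma mem_orbit : e ∈ hG.orbit d ↔ ∃ i, hG.nextDart^[i] d = e := by
  refine ⟨fun h => ?_, fun ⟨i, hi⟩ => ?_⟩
  · obtain ⟨i, -, hi⟩ := mem_image.mp h
    exact ⟨i, hi⟩
  · exact mem_image.mpr ⟨i % minimalPeriod hG.nextDart d,
      mem_range.mpr (Nat.mod_lt _ (hG.minimalPeriod_nextDart_pos d)),
      iterate_mod_minimalPeriod_eq.trans hi⟩

lemma iterate_mem_orbit (i : ℕ) : hG.nextDart^[i] d ∈ hG.orbit d := mem_orbit.mpr ⟨i, rfl⟩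

lemma exists_iterate_eq_of_mem_orbit {e' : G.Dart} (he : e ∈ hG.orbit d)
    (he' : e' ∈ hG.orbit d) : ∃ m, hG.nextDart^[m] e = e' := by
  obtain ⟨i, rfl⟩ := mem_orbit.mp he
  obtain ⟨j, rfl⟩ := mem_orbit.mp he'
  set k := minimalPeriod hG.nextDart d
  have hle : i ≤ k * i := Nat.le_mul_of_pos_left i (hG.minimalPeriod_nextDart_pos d)
  refine ⟨j + k * i - i, ?_⟩
  rw [← iterate_add_apply, show j + k * i - i + i = j + k * i by omega, iterate_add_apply,
    ((isPeriodicPt_minimalPeriod hG.nextDart d).mul_const i).eq]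

lemma nextDart_mem_orbit_iff : hG.nextDart e ∈ hG.orbit d ↔ e ∈ hG.orbit d := by
  refine ⟨fun h => ?_, fun h => ?_⟩
  · obtain ⟨i, hi⟩ := mem_orbit.mp h
    have hk := hG.minimalPeriod_nextDart_pos d
    refine mem_orbit.mpr ⟨i + minimalPeriod hG.nextDart d - 1, hG.nextDart_injective ?_⟩
    rw [← iterate_succ_apply' hG.nextDart, ← hi, Nat.succ_eq_add_one,
      Nat.sub_add_cancel (by omega), iterate_add_apply,
      (isPeriodicPt_minimalPeriod hG.nextDart d).eq]
  · obtain ⟨i, rfl⟩ := mem_orbit.mp h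
    exact mem_orbit.mpr ⟨i + 1, iterate_succ_apply' _ _ _⟩

lemma symm_notMem_orbit (he : e ∈ hG.orbit d) : e.symm ∉ hG.orbit d := fun hs => by
  obtain ⟨m, hm⟩ := exists_iterate_eq_of_mem_orbit he hs
  obtain ⟨m', h | h⟩ :=
    hG.exists_apply_iterate_eq_symm Function.Commute.id_left (d := e) (j := m) (by simp [hm])
  · exact (hG.nextDart^[m'] e).symm_ne h.symm
  · refine hG.fst_ne_nextDart_snd (hG.nextDart^[m'] e) ?_
    rw [← iterate_succ_apply' hG.nextDart]
    exact congrArg (·.fst) h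

lemma exists_mem_orbit_fst_eq {v : V} (hv : G.Reachable d.fst v) :
    ∃ e ∈ hG.orbit d, e.fst = v := by
  suffices ∀ u (p : G.Walk u v), (∃ e ∈ hG.orbit d, e.fst = u) →
      ∃ e ∈ hG.orbit d, e.fst = v from this _ hv.some ⟨d, iterate_mem_orbit 0, rfl⟩
  intro u p
  clear hv
  induction p with
  | nil => exact id
  | @cons u w _ hadj _ ih =>
    rintro ⟨e, he, rfl⟩
    obtain ⟨q, rfl⟩ := (Finite.injective_iff_surjective.mp hG.nextDart_injective) e
    rcases hG.eq_nextDart_or_eq_symm (d := q) (e := ⟨(_, w), hadj⟩) rfl with h | h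
    · exact ih ⟨_, nextDart_mem_orbit_iff.mpr he, (congrArg (·.snd) h).symm⟩
    · exact ih ⟨q, nextDart_mem_orbit_iff.mp he, (congrArg (·.snd) h).symm⟩

lemma mem_orbit_or_symm_mem_orbit (he : G.Reachable d.fst e.fst) :
    e ∈ hG.orbit d ∨ e.symm ∈ hG.orbit d := by
  obtain ⟨e', he', hfst⟩ := exists_mem_orbit_fst_eq (hG := hG) he
  obtain ⟨q, rfl⟩ := (Finite.injective_iff_surjective.mp hG.nextDart_injective) e'
  rcases hG.eq_nextDart_or_eq_symm (d := q) (e := e) hfst.symm with rfl | rfl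
  · exact Or.inl he'
  · exact Or.inr (by simpa using nextDart_mem_orbit_iff.mp he')

lemma reachable_fst_of_mem_orbit (he : e ∈ hG.orbit d) : G.Reachable d.fst e.fst := by
  obtain ⟨i, rfl⟩ := mem_orbit.mp he
  clear he
  induction i with
  | zero => rfl
  | succ i ih =>
    rw [iterate_succ_apply', nextDart_fst]
    exact ih.trans (hG.nextDart^[i] d).adj.reachable

lemma fst_iterate_mem_supp {K : G.ConnectedComponent} (hd : d.fst ∈ K.supp) (i : ℕ) :
    (hG.nextDart^[i] d).fst ∈ K.supp :=
  hd ▸ ConnectedComponent.eq.mpr (reachable_fst_of_mem_orbit (iterate_mem_orbit i)).symm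

lemma filter_fst_mem_supp_eq_orbit_union :
    ({e : G.Dart | e.fst ∈ (G.connectedComponentMk d.fst).supp} : Finset G.Dart) =
      hG.orbit d ∪ (hG.orbit d).image Dart.symm := by
  ext e
  simp only [mem_filter, mem_univ, true_and, mem_union, mem_image,
    ConnectedComponent.mem_supp_iff, ConnectedComponent.eq]
  refine ⟨fun h => (mem_orbit_or_symm_mem_orbit h.symm).imp id fun h => ⟨_, h, e.symm_symm⟩,
    ?_⟩
  rintro (h | ⟨e, h, rfl⟩)
  · exact (reachable_fst_of_mem_orbit h).symm
  · exact ((reachable_fst_of_mem_orbit h).trans e.adj.reachable).symm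

lemma disjoint_orbit_image_symm : Disjoint (hG.orbit d) ((hG.orbit d).image Dart.symm) := by
  refine Finset.disjoint_left.mpr fun e he hs => ?_
  obtain ⟨e', he', rfl⟩ := mem_image.mp hs
  exact symm_notMem_orbit he' (by simpa using he)

lemma mapDart_mem_orbit {K : G.ConnectedComponent} (hd : d.fst ∈ K.supp) (τ : G ≃g G)
    (hτK : τ.connectedComponentEquiv K = K) (hfix : ∀ v ∈ K.supp, τ v ≠ v)
    (hedge : ∀ v ∈ K.supp, ¬ G.Adj v (τ v)) : τ.toHom.mapDart d ∈ hG.orbit d := by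
  have hreach : G.Reachable d.fst (τ d.fst) := by
    obtain rfl : G.connectedComponentMk d.fst = K := hd
    exact ConnectedComponent.eq.mp hτK.symm
  refine (mem_orbit_or_symm_mem_orbit hreach).resolve_right fun h => ?_
  obtain ⟨j, hj⟩ := mem_orbit.mp h
  obtain ⟨m, hm | hm⟩ := hG.exists_apply_iterate_eq_symm (fun e => (hG.map_nextDart τ e).symm)
    (d := d) (j := j) (by rw [hj]; simp)
  · have hfst : τ (hG.nextDart^[m] d).fst = (hG.nextDart^[m] d).snd := by
      simpa using congrArg (·.fst) hm
    exact hedge _ (fst_iterate_mem_supp hd m) (hfst ▸ (hG.nextDart^[m] d).adj)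
  · have hsnd := fst_iterate_mem_supp (hG := hG) hd (m + 1)
    rw [iterate_succ_apply', nextDart_fst] at hsnd
    exact hfix _ hsnd (by simpa [iterate_succ_apply'] using congrArg (·.snd) hm)

lemma exists_iterate_add_eq_mapDart {K : G.ConnectedComponent} (hd : d.fst ∈ K.supp)
    (τ : G ≃g G) (hτ : Involutive τ) (hτK : τ.connectedComponentEquiv K = K)
    (hfix : ∀ v ∈ K.supp, τ v ≠ v) (hedge : ∀ v ∈ K.supp, ¬ G.Adj v (τ v)) :
    ∃ j, j + j = minimalPeriod hG.nextDart d ∧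
      ∀ i, hG.nextDart^[i + j] d = τ.toHom.mapDart (hG.nextDart^[i] d) := by
  have hcomm : Function.Commute τ.toHom.mapDart hG.nextDart := fun e =>
    (hG.map_nextDart τ e).symm
  obtain ⟨j, hjk, hj⟩ := mem_image.mp (mapDart_mem_orbit hd τ hτK hfix hedge)
  rw [mem_range] at hjk
  have hshift : ∀ i, hG.nextDart^[i + j] d = τ.toHom.mapDart (hG.nextDart^[i] d) := fun i => by
    rw [iterate_add_apply, hj, (hcomm.iterate_right i).eq]
  refine ⟨j, ?_, hshift⟩
  have hj0 : j ≠ 0 := by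
    rintro rfl
    exact hfix _ hd (congrArg (·.fst) hj).symm
  have hper : IsPeriodicPt hG.nextDart (j + j) d := by
    rw [IsPeriodicPt, IsFixedPt, hshift, hj]
    exact Dart.ext _ _ (Prod.ext (hτ _) (hτ _))
  obtain ⟨q, hq⟩ := hper.minimalPeriod_dvd
  rcases q with _ | _ | q
  · omega
  · omega
  · nlinarith

end Orbit

end IsCycles

section CrossCount

variable [Fintype V] (f : V → ZMod 2)

open scoped Classical in
noncomputable def crossCount (K : G.ConnectedComponent) : ℕ :=
  #{d : G.Dart | d.fst ∈ K.supp ∧ f d.fst ≠ f d.snd}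

open scoped Classical in
lemma sum_crossCount (s : Finset G.ConnectedComponent) :
    ∑ K ∈ s, crossCount f K =
      #{d : G.Dart | G.connectedComponentMk d.fst ∈ s ∧ f d.fst ≠ f d.snd} := by
  rw [card_eq_sum_card_fiberwise (f := fun d => G.connectedComponentMk d.fst) (t := s)
    fun d hd => (mem_filter.mp hd).2.1]
  refine sum_congr rfl fun K hK => ?_
  rw [crossCount, filter_filter]
  congr 1
  refine filter_congr fun d _ => ?_
  simp only [ConnectedComponent.mem_supp_iff]
  constructor
  · rintro ⟨h1, h2⟩
    exact ⟨⟨h1 ▸ hK, h2⟩, h1⟩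
  · rintro ⟨⟨-, h2⟩, h1⟩
    exact ⟨h1, h2⟩

lemma crossCount_connectedComponentEquiv (τ : G ≃g G) {K : G.ConnectedComponent} {c : ZMod 2}
    (hf : ∀ v ∈ K.supp, f (τ v) = f v + c) :
    crossCount f (τ.connectedComponentEquiv K) = crossCount f K := by
  classical
  have hmem : ∀ v, v ∈ (τ.connectedComponentEquiv K).supp ↔ τ.symm v ∈ K.supp := fun v =>
    ConnectedComponent.iso_inv_image_comp_eq_iff_eq_map.symm
  have hcross : ∀ e : G.Dart, e.fst ∈ K.supp →
      (f (τ e.fst) ≠ f (τ e.snd) ↔ f e.fst ≠ f e.snd) := fun e he => by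
    rw [hf _ he, hf _ ((K.mem_supp_congr_adj e.adj).mp he), ne_eq, add_left_inj]
  symm
  refine card_nbij' τ.toHom.mapDart τ.symm.toHom.mapDart (fun e he => ?_)
    (fun e he => ?_) (fun e _ => ?_) (fun e _ => ?_)
  · simp only [coe_filter, mem_univ, true_and, Set.mem_ofPred_eq] at he ⊢
    refine ⟨(hmem _).mpr ?_, (hcross e he.1).mpr he.2⟩
    simpa using he.1
  · simp only [coe_filter, mem_univ, true_and, Set.mem_ofPred_eq] at he ⊢
    have h1 : τ.symm e.fst ∈ K.supp := (hmem _).mp he.1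
    refine ⟨h1, ?_⟩
    simpa using (hcross (τ.symm.toHom.mapDart e) h1).mp (by simpa using he.2)
  · simp [Dart.ext_iff, Prod.ext_iff]
  · simp [Dart.ext_iff, Prod.ext_iff]

lemma IsCycles.crossCount_eq_two_mul (hG : G.IsCycles) (d : G.Dart) :
    crossCount f (G.connectedComponentMk d.fst) =
      2 * #{i ∈ range (minimalPeriod hG.nextDart d) |
        f (hG.nextDart^[i] d).fst ≠ f (hG.nextDart^[i + 1] d).fst} := by
  classical
  have hcross : ∀ e : G.Dart, f e.snd ≠ f e.fst ↔ f e.fst ≠ f e.snd := fun _ => ne_comm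
  rw [crossCount, ← filter_filter, filter_fst_mem_supp_eq_orbit_union (hG := hG), filter_union,
    card_union_of_disjoint (disjoint_filter_filter disjoint_orbit_image_symm), filter_image,
    card_image_of_injective _ Dart.symm_involutive.injective]
  simp only [Dart.symm_toProd, Prod.fst_swap, Prod.snd_swap, hcross, card_filter_orbit (hG := hG),
    iterate_succ_apply', IsCycles.nextDart_fst]
  ring

lemma IsCycles.four_dvd_crossCount (hG : G.IsCycles) {K : G.ConnectedComponent} {d : G.Dart}
    (hd : d.fst ∈ K.supp) : 4 ∣ crossCount f K := by
  obtain rfl : G.connectedComponentMk d.fst = K := hd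
  have h := ZMod.natCast_card_filter_range_ne_succ (fun i => f (hG.nextDart^[i] d).fst)
    (minimalPeriod hG.nextDart d)
  rw [(isPeriodicPt_minimalPeriod _ _).eq, iterate_zero_apply, sub_self,
    ZMod.natCast_eq_zero_iff_even] at h
  obtain ⟨m, hm⟩ := h
  rw [hG.crossCount_eq_two_mul f d, hm]
  exact ⟨m, by ring⟩

/-- `τ` rotates the cycle by half its length (`exists_iterate_add_eq_mapDart`): the colour changes
`c` times modulo 2 along the half from a vertex `v` to `τ v`, and the other half is its image. -/
lemma IsCycles.exists_crossCount_eq_four_mul (hG : G.IsCycles) {K : G.ConnectedComponent}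
    {d : G.Dart} (hd : d.fst ∈ K.supp) (τ : G ≃g G) (hτ : Involutive τ)
    (hτK : τ.connectedComponentEquiv K = K) {c : ZMod 2}
    (hf : ∀ v ∈ K.supp, f (τ v) = f v + c) (hfix : ∀ v ∈ K.supp, τ v ≠ v)
    (hedge : ∀ v ∈ K.supp, ¬ G.Adj v (τ v)) :
    ∃ m, crossCount f K = 4 * m ∧ (m : ZMod 2) = c := by
  classical
  obtain ⟨j, hk, hshift⟩ := hG.exists_iterate_add_eq_mapDart hd τ hτ hτK hfix hedge
  set g : ℕ → ZMod 2 := fun i => f (hG.nextDart^[i] d).fst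
  have hg : ∀ i, g (i + j) = g i + c := fun i => by
    simp only [g, hshift]
    exact hf _ (IsCycles.fst_iterate_mem_supp hd i)
  have hhalf : #{i ∈ range (j + j) | g i ≠ g (i + 1)} =
      2 * #{i ∈ range j | g i ≠ g (i + 1)} := by
    rw [card_filter, card_filter, sum_range_add, two_mul]
    congr 1
    refine sum_congr rfl fun i _ => ?_
    simp only [add_comm j i, hg, add_right_comm _ j 1, ne_eq, add_left_inj]
  obtain rfl : G.connectedComponentMk d.fst = K := hd
  refine ⟨#{i ∈ range j | g i ≠ g (i + 1)}, ?_, ?_⟩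
  · rw [hG.crossCount_eq_two_mul f d]
    change 2 * #{i ∈ range (minimalPeriod hG.nextDart d) | g i ≠ g (i + 1)} = _
    rw [← hk, hhalf]
    ring
  · rw [ZMod.natCast_card_filter_range_ne_succ, show j = 0 + j from (zero_add j).symm, hg]
    ring

end CrossCount

end SimpleGraph

namespace OneRotational

open SimpleGraph

open scoped Classical

variable {n : ℕ} {F : SimpleGraph (Option (ZMod (2 * n)))}

def parity (n : ℕ) : ZMod (2 * n) →+* ZMod 2 := ZMod.castHom (dvd_mul_right 2 n) (ZMod 2)

/-- `∞ = none` gets the junk colour `0`; only cycles avoiding `∞` are ever coloured. -/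
def vertexParity (n : ℕ) (v : Option (ZMod (2 * n))) : ZMod 2 := v.elim 0 (parity n)

def translateIso (hinv : obTranslate F (n : ZMod (2 * n)) = F) : F ≃g F where
  toEquiv := Equiv.optionCongr (Equiv.addRight (n : ZMod (2 * n)))
  map_rel_iff' {u v} := by
    have h : (obTranslate F n).Adj (Equiv.optionCongr (Equiv.addRight (n : ZMod (2 * n))) u)
        (Equiv.optionCongr (Equiv.addRight (n : ZMod (2 * n))) v) ↔ F.Adj u v := map_adj_apply
    rwa [hinv] at h

@[simp]
lemma translateIso_some (hinv : obTranslate F (n : ZMod (2 * n)) = F) (x : ZMod (2 * n)) :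
    translateIso hinv (some x) = some (x + n) := rfl

lemma natCast_add_natCast_self : (n : ZMod (2 * n)) + n = 0 := by
  rw [← Nat.cast_add, ← two_mul, ZMod.natCast_self]

lemma neg_natCast_eq_natCast : -(n : ZMod (2 * n)) = n :=
  neg_eq_of_add_eq_zero_left natCast_add_natCast_self

lemma involutive_translateIso (hinv : obTranslate F (n : ZMod (2 * n)) = F) :
    Involutive (translateIso hinv) := by
  rintro (_ | x)
  · rfl
  · simp [add_assoc, natCast_add_natCast_self]

lemma vertexParity_translateIso (hinv : obTranslate F (n : ZMod (2 * n)) = F)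
    {v : Option (ZMod (2 * n))} (hv : v ≠ none) :
    vertexParity n (translateIso hinv v) = vertexParity n v + n := by
  obtain ⟨x, rfl⟩ := Option.ne_none_iff_exists'.mp hv
  simp [vertexParity]

lemma ne_none_of_mem_supp {K : F.ConnectedComponent} (hK : K ≠ F.connectedComponentMk none)
    {v : Option (ZMod (2 * n))} (hv : v ∈ K.supp) : v ≠ none := by
  rintro rfl
  exact hK hv.symm

variable [NeZero n]

noncomputable def fixedComponents (hinv : obTranslate F (n : ZMod (2 * n)) = F) :
    Finset F.ConnectedComponent :=
  {K ∈ univ.erase (F.connectedComponentMk none) |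
    (translateIso hinv).connectedComponentEquiv K = K}

lemma mem_fixedComponents (hinv : obTranslate F (n : ZMod (2 * n)) = F)
    {K : F.ConnectedComponent} : K ∈ fixedComponents hinv ↔
      K ≠ F.connectedComponentMk none ∧ (translateIso hinv).connectedComponentEquiv K = K := by
  simp [fixedComponents]

lemma add_natCast_ne_self (x : ZMod (2 * n)) : x + n ≠ x := fun h => by
  have hn := Nat.pos_of_neZero n
  have h0 : (n : ZMod (2 * n)) = 0 := by simpa using h
  rw [ZMod.natCast_eq_zero_iff] at h0
  have := Nat.le_of_dvd hn h0
  omega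

lemma translateIso_ne_self (hinv : obTranslate F (n : ZMod (2 * n)) = F)
    {v : Option (ZMod (2 * n))} (hv : v ≠ none) : translateIso hinv v ≠ v := by
  obtain ⟨x, rfl⟩ := Option.ne_none_iff_exists'.mp hv
  simpa using add_natCast_ne_self x

lemma card_parity_eq_one : #{δ : ZMod (2 * n) | parity n δ = 1} = n := by
  have hZ2 : ∀ p : ZMod 2, (p = 1 → ¬ p + 1 = 1) ∧ (¬ p = 1 → p - 1 = 1) := by decide
  have hshift : #{δ : ZMod (2 * n) | parity n δ = 1} =
      #{δ : ZMod (2 * n) | ¬ parity n δ = 1} := by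
    refine card_nbij' (· + 1) (· - 1) (fun δ hδ => ?_) (fun δ hδ => ?_)
      (fun δ _ => add_sub_cancel_right δ 1) (fun δ _ => sub_add_cancel δ 1)
    · simp only [coe_filter, Set.mem_ofPred_eq, mem_univ, true_and, map_add, map_one] at hδ ⊢
      exact (hZ2 _).1 hδ
    · simp only [coe_filter, Set.mem_ofPred_eq, mem_univ, true_and, map_sub, map_one] at hδ ⊢
      exact (hZ2 _).2 hδ
  have htot := card_filter_add_card_filter_not (s := univ) fun δ : ZMod (2 * n) =>
    parity n δ = 1
  rw [card_univ, ZMod.card] at htot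
  omega

lemma card_parity_eq_one_and_ne :
    #{δ : ZMod (2 * n) | parity n δ = 1 ∧ δ ≠ n} = n - n % 2 := by
  rw [← filter_filter, filter_ne', card_erase_eq_ite, card_parity_eq_one]
  simp only [mem_filter, mem_univ, true_and, map_natCast, ← ZMod.natCast_mod n 2]
  rcases Nat.mod_two_eq_zero_or_one n with h | h <;> simp [h]

lemma exists_supp_none_eq (hinv : obTranslate F (n : ZMod (2 * n)) = F)
    (hreg : ∀ v, (F.neighborSet v).ncard = 2)
    (hinf3 : (F.connectedComponentMk none).supp.ncard = 3) :
    ∃ a : ZMod (2 * n), (F.connectedComponentMk none).supp = {none, some a, some (a + n)} ∧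
      F.Adj (some a) (some (a + n)) := by
  set K := F.connectedComponentMk none
  obtain ⟨v, hv, hvne⟩ := Set.exists_ne_of_one_lt_ncard (by omega : 1 < K.supp.ncard) none
  obtain ⟨a, rfl⟩ := Option.ne_none_iff_exists'.mp hvne
  have hτa : some (a + n) ∈ K.supp := by
    change (translateIso hinv).connectedComponentEquiv (F.connectedComponentMk (some a)) =
      (translateIso hinv).connectedComponentEquiv K
    rw [hv]
  have hsupp : K.supp = {none, some a, some (a + n)} := by
    refine (Set.eq_of_subset_of_ncard_le ?_ ?_ (Set.toFinite _)).symm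
    · simp only [Set.insert_subset_iff, Set.singleton_subset_iff]
      exact ⟨ConnectedComponent.connectedComponentMk_mem, hv, hτa⟩
    · rw [hinf3, Set.ncard_eq_three.mpr ⟨_, _, _, by simp, by simp, by simpa using
        (add_natCast_ne_self a).symm, rfl⟩]
  refine ⟨a, hsupp, by_contra fun hna => ?_⟩
  have hsub : F.neighborSet (some a) ⊆ {none} := fun w hw => by
    have hwK : w ∈ K.supp := (K.mem_supp_congr_adj hw).mp hv
    rw [hsupp] at hwK
    rcases hwK with rfl | rfl | rfl
    · rfl
    · exact absurd hw F.irrefl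
    · exact absurd hw hna
  have := Set.ncard_le_ncard hsub
  rw [hreg, Set.ncard_singleton] at this
  omega

/-- Translation by `n` doubles every occurrence of a difference, and `F` has only `2(2n - 1)`
darts between finite vertices. -/
lemma card_adj_sub_eq_two (hinv : obTranslate F (n : ZMod (2 * n)) = F)
    (hreg : ∀ v, (F.neighborSet v).ncard = 2)
    (hdiff : ∀ d ≠ (0 : ZMod (2 * n)), ∃ x y, F.Adj (some x) (some y) ∧ x - y = d)
    {δ : ZMod (2 * n)} (hδ : δ ≠ 0) :
    #{z : ZMod (2 * n) × ZMod (2 * n) | F.Adj (some z.1) (some z.2) ∧ z.1 - z.2 = δ} = 2 := by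
  rw [← filter_filter]
  refine card_filter_sub_eq_two (fun z hz h => ?_) ?_ (fun δ hδ => ?_) hδ
  · exact F.irrefl (h ▸ (mem_filter.mp hz).2)
  · have h := card_adj_some_add_four hreg
    rw [ZMod.card] at h ⊢
    omega
  · obtain ⟨x, y, hxy, rfl⟩ := hdiff δ hδ
    refine one_lt_card_iff.mpr ⟨(x, y), (x + n, y + n), ?_, ?_, ?_⟩
    · simpa using hxy
    · simp only [filter_filter, mem_filter, mem_univ, true_and]
      refine ⟨?_, by ring⟩
      simpa using (translateIso hinv).map_adj_iff.mpr hxy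
    · simpa using (add_natCast_ne_self x).symm

/-- The difference `n` occurs only twice, on the edge `{a, a + n}` of the triangle through `∞`. -/
lemma mem_supp_none_iff_sub_eq (hinv : obTranslate F (n : ZMod (2 * n)) = F)
    (hreg : ∀ v, (F.neighborSet v).ncard = 2)
    (hdiff : ∀ d ≠ (0 : ZMod (2 * n)), ∃ x y, F.Adj (some x) (some y) ∧ x - y = d)
    (hinf3 : (F.connectedComponentMk none).supp.ncard = 3) {x y : ZMod (2 * n)}
    (hxy : F.Adj (some x) (some y)) :
    some x ∈ (F.connectedComponentMk none).supp ↔ x - y = n := by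
  obtain ⟨a, hsupp, ha⟩ := exists_supp_none_eq hinv hreg hinf3
  have hn : -(n : ZMod (2 * n)) = n := neg_natCast_eq_natCast
  constructor
  · intro hx
    have hy := ((F.connectedComponentMk none).mem_supp_congr_adj hxy).mp hx
    rw [hsupp] at hx hy
    simp only [Set.mem_insert_iff, Set.mem_singleton_iff, reduceCtorEq, Option.some.injEq,
      false_or] at hx hy
    rcases hx with rfl | rfl <;> rcases hy with rfl | rfl
    · exact absurd hxy F.irrefl
    · rw [sub_add_cancel_left, hn]
    · rw [add_sub_cancel_left]
    · exact absurd hxy F.irrefl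
  · intro hd
    have hpair : ({(a, a + n), (a + n, a)} : Finset (ZMod (2 * n) × ZMod (2 * n))) =
        ({z : ZMod (2 * n) × ZMod (2 * n) | F.Adj (some z.1) (some z.2) ∧ z.1 - z.2 = n} :
          Finset _) := by
      refine eq_of_subset_of_card_le (fun z hz => ?_) ?_
      · simp only [mem_insert, mem_singleton] at hz
        rcases hz with rfl | rfl
        · simpa [hn] using ha
        · simpa using ha.symm
      · rw [card_adj_sub_eq_two hinv hreg hdiff (fun h => add_natCast_ne_self a (by simp [h])),
          card_pair (by simpa using (add_natCast_ne_self a).symm)]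
    have hz : (x, y) ∈ ({(a, a + n), (a + n, a)} : Finset _) := by
      rw [hpair]
      simpa using ⟨hxy, hd⟩
    rw [hsupp]
    simp only [mem_insert, mem_singleton, Prod.mk.injEq] at hz
    rcases hz with ⟨rfl, -⟩ | ⟨rfl, -⟩ <;> simp

lemma card_dart_vertexParity_ne (hinv : obTranslate F (n : ZMod (2 * n)) = F)
    (hreg : ∀ v, (F.neighborSet v).ncard = 2)
    (hdiff : ∀ d ≠ (0 : ZMod (2 * n)), ∃ x y, F.Adj (some x) (some y) ∧ x - y = d)
    (hinf3 : (F.connectedComponentMk none).supp.ncard = 3) :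
    #{d : F.Dart | d.fst ∉ (F.connectedComponentMk none).supp ∧
      vertexParity n d.fst ≠ vertexParity n d.snd} = 2 * (n - n % 2) := by
  have hZ2 : ∀ p q : ZMod 2, p ≠ q ↔ p - q = 1 := by decide
  have hnone : none ∈ (F.connectedComponentMk none).supp := rfl
  have hsome : ∀ d : F.Dart, d.fst ∉ (F.connectedComponentMk none).supp →
      d.fst = some (d.fst.getD 0) ∧ d.snd = some (d.snd.getD 0) := by
    rintro ⟨⟨_ | x, _ | y⟩, h⟩ hd
    · exact absurd hnone hd
    · exact absurd hnone hd
    · exact absurd ((F.connectedComponentMk none).mem_supp_congr_adj h.symm |>.mp hnone) hd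
    · exact ⟨rfl, rfl⟩
  rw [← card_parity_eq_one_and_ne, ← card_filter_sub_eq_two_mul
    (fun δ hδ => by rw [filter_filter]; exact card_adj_sub_eq_two hinv hreg hdiff hδ) _
    (by simp)]
  refine card_nbij (fun d => (d.fst.getD 0, d.snd.getD 0)) (fun d hd => ?_)
    (fun d hd d' hd' h => ?_) (fun z hz => ?_)
  · simp only [coe_filter, mem_filter, Set.mem_ofPred_eq, mem_univ, true_and] at hd ⊢
    obtain ⟨h1, h2⟩ := hsome d hd.1
    have hadj := d.adj
    rw [h1, h2] at hadj hd
    refine ⟨hadj, ?_,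
      fun hxy => hd.1 ((mem_supp_none_iff_sub_eq hinv hreg hdiff hinf3 hadj).mpr hxy)⟩
    simpa [vertexParity, hZ2] using hd.2
  · simp only [coe_filter, Set.mem_ofPred_eq, mem_univ, true_and] at hd hd'
    obtain ⟨h1, h2⟩ := hsome d hd.1
    obtain ⟨h1', h2'⟩ := hsome d' hd'.1
    simp only [Prod.mk.injEq] at h
    exact Dart.ext _ _ (Prod.ext (by rw [h1, h1', h.1]) (by rw [h2, h2', h.2]))
  · obtain ⟨x, y⟩ := z
    simp only [coe_filter, mem_filter, Set.mem_ofPred_eq, mem_univ, true_and] at hz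
    refine ⟨⟨(some x, some y), hz.1⟩, ?_, rfl⟩
    simp only [coe_filter, Set.mem_ofPred_eq, mem_univ, true_and]
    refine ⟨fun hx => hz.2.2 ((mem_supp_none_iff_sub_eq hinv hreg hdiff hinf3 hz.1).mp hx), ?_⟩
    simpa [vertexParity, hZ2] using hz.2.1

lemma four_dvd_crossCount_vertexParity (hreg : ∀ v, (F.neighborSet v).ncard = 2)
    (K : F.ConnectedComponent) : 4 ∣ crossCount (vertexParity n) K := by
  obtain ⟨v, hv⟩ := K.exists_rep
  obtain ⟨w, hw⟩ :=
    Set.nonempty_of_ncard_ne_zero (s := F.neighborSet v) (by rw [hreg]; norm_num)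
  exact IsCycles.four_dvd_crossCount _ (fun v _ => hreg v) (d := ⟨(v, w), hw⟩) hv

lemma crossCount_vertexParity_translateIso (hinv : obTranslate F (n : ZMod (2 * n)) = F)
    {K : F.ConnectedComponent} (hK : K ≠ F.connectedComponentMk none) :
    crossCount (vertexParity n) ((translateIso hinv).connectedComponentEquiv K) =
      crossCount (vertexParity n) K :=
  crossCount_connectedComponentEquiv _ _ fun _ hv =>
    vertexParity_translateIso hinv (ne_none_of_mem_supp hK hv)

lemma crossCount_vertexParity_of_mem_fixedComponents (hinv : obTranslate F (n : ZMod (2 * n)) = F)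
    (hreg : ∀ v, (F.neighborSet v).ncard = 2)
    (hdiff : ∀ d ≠ (0 : ZMod (2 * n)), ∃ x y, F.Adj (some x) (some y) ∧ x - y = d)
    (hinf3 : (F.connectedComponentMk none).supp.ncard = 3) {K : F.ConnectedComponent}
    (hK : K ∈ fixedComponents hinv) : (crossCount (vertexParity n) K : ZMod 8) = 4 * n := by
  obtain ⟨hK, hfix⟩ := (mem_fixedComponents hinv).mp hK
  obtain ⟨v, hv⟩ := K.exists_rep
  obtain ⟨w, hw⟩ :=
    Set.nonempty_of_ncard_ne_zero (s := F.neighborSet v) (by rw [hreg]; norm_num)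
  have hedge : ∀ u ∈ K.supp, ¬ F.Adj u (translateIso hinv u) := fun u hu hadj => by
    obtain ⟨x, rfl⟩ := Option.ne_none_iff_exists'.mp (ne_none_of_mem_supp hK hu)
    refine hK (hu.symm.trans ((mem_supp_none_iff_sub_eq hinv hreg hdiff hinf3 hadj).mpr ?_))
    change x - (x + n) = n
    rw [sub_add_cancel_left, neg_natCast_eq_natCast]
  obtain ⟨m, hm, hmn⟩ := IsCycles.exists_crossCount_eq_four_mul _ (fun v _ => hreg v)
    (d := ⟨(v, w), hw⟩) hv (translateIso hinv) (involutive_translateIso hinv) hfix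
    (fun _ hu => vertexParity_translateIso hinv (ne_none_of_mem_supp hK hu))
    (fun _ hu => translateIso_ne_self hinv (ne_none_of_mem_supp hK hu)) hedge
  rw [ZMod.natCast_eq_natCast_iff'] at hmn
  rw [hm, show (4 : ZMod 8) * n = ((4 * n : ℕ) : ZMod 8) by push_cast; rfl,
    ZMod.natCast_eq_natCast_iff']
  omega

lemma even_ncard_supp_of_mem_fixedComponents (hinv : obTranslate F (n : ZMod (2 * n)) = F)
    {K : F.ConnectedComponent} (hK : K ∈ fixedComponents hinv) : Even K.supp.ncard := by
  obtain ⟨hK, hfix⟩ := (mem_fixedComponents hinv).mp hK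
  have hmem : ∀ v ∈ K.supp, translateIso hinv v ∈ K.supp := fun v hv => by
    rw [← hfix]
    exact congrArg (translateIso hinv).connectedComponentEquiv hv
  rw [Set.ncard_eq_toFinset_card']
  exact even_card_of_involution (g := translateIso hinv)
    (fun v hv => by simpa using hmem v (by simpa using hv))
    (fun v _ => involutive_translateIso hinv v)
    (fun v hv => translateIso_ne_self hinv (ne_none_of_mem_supp hK (by simpa using hv)))

lemma natCast_two_mul_eq_card_fixedComponents (hinv : obTranslate F (n : ZMod (2 * n)) = F)
    (hreg : ∀ v, (F.neighborSet v).ncard = 2)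
    (hdiff : ∀ d ≠ (0 : ZMod (2 * n)), ∃ x y, F.Adj (some x) (some y) ∧ x - y = d)
    (hinf3 : (F.connectedComponentMk none).supp.ncard = 3) :
    ((2 * (n - n % 2) : ℕ) : ZMod 8) = #(fixedComponents hinv) * (4 * n) := by
  set τK := (translateIso hinv).connectedComponentEquiv
  have hτK : Involutive τK :=
    Iso.involutive_connectedComponentEquiv (involutive_translateIso hinv)
  set s := univ.erase (F.connectedComponentMk none)
  have hdarts : ∑ K ∈ s, crossCount (vertexParity n) K =
      #{d : F.Dart | d.fst ∉ (F.connectedComponentMk none).supp ∧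
        vertexParity n d.fst ≠ vertexParity n d.snd} := by
    rw [sum_crossCount]
    simp [s, ConnectedComponent.mem_supp_iff]
  have hmem : ∀ K ∈ s, τK K ∈ s := fun K hK => by
    refine mem_erase.mpr ⟨fun h => ne_of_mem_erase hK ?_, mem_univ _⟩
    rw [← hτK K, h]
    rfl
  have hcancel : ∀ K ∈ s, τK K ≠ K →
      (crossCount (vertexParity n) K : ZMod 8) + crossCount (vertexParity n) (τK K) = 0 := by
    intro K hK _
    obtain ⟨m, hm⟩ := four_dvd_crossCount_vertexParity hreg K
    rw [crossCount_vertexParity_translateIso hinv (ne_of_mem_erase hK), ← Nat.cast_add,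
      ZMod.natCast_eq_zero_iff, hm]
    exact ⟨m, by ring⟩
  rw [← card_dart_vertexParity_ne hinv hreg hdiff hinf3, ← hdarts, Nat.cast_sum,
    sum_eq_sum_filter_of_involution hmem (fun K _ => hτK K) hcancel, ← nsmul_eq_mul,
    ← sum_const]
  exact sum_congr rfl fun K hK =>
    crossCount_vertexParity_of_mem_fixedComponents hinv hreg hdiff hinf3 hK

lemma natCast_ncard_even_eq_card_fixedComponents (hinv : obTranslate F (n : ZMod (2 * n)) = F)
    (hinf3 : (F.connectedComponentMk none).supp.ncard = 3) :
    ({K : F.ConnectedComponent | Even K.supp.ncard}.ncard : ZMod 2) =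
      #(fixedComponents hinv) := by
  set τK := (translateIso hinv).connectedComponentEquiv
  have hτK : Involutive τK :=
    Iso.involutive_connectedComponentEquiv (involutive_translateIso hinv)
  have hncard : ∀ K, (τK K).supp.ncard = K.supp.ncard := fun K => by
    rw [← Nat.card_coe_set_eq, ← Nat.card_coe_set_eq]
    exact Nat.card_congr (ConnectedComponent.isoEquivSupp (translateIso hinv) K).symm
  rw [Set.ncard_eq_toFinset_card', Set.toFinset_ofPred, card_eq_sum_ones, Nat.cast_sum,
    Nat.cast_one, sum_eq_sum_filter_of_involution (g := τK)
      (fun K hK => by simpa [hncard] using hK) (fun K _ => hτK K) fun _ _ _ => by decide,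
    sum_const, nsmul_one, filter_filter]
  congr 2
  ext K
  rw [mem_filter, mem_fixedComponents]
  simp only [mem_univ, true_and]
  refine and_congr_left fun hfix => ⟨?_, fun hK => even_ncard_supp_of_mem_fixedComponents hinv
    ((mem_fixedComponents hinv).mpr ⟨hK, hfix⟩)⟩
  rintro heven rfl
  rw [hinf3] at heven
  exact absurd heven (by decide)

end OneRotational

open OneRotational in
theorem stmt7_general (n : ℕ) (F : SimpleGraph (Option (ZMod (2 * n))))
    (hreg : ∀ v, (F.neighborSet v).ncard = 2)
    (hdiff : ∀ d : ZMod (2 * n), d ≠ 0 →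
      ∃ x y : ZMod (2 * n), F.Adj (some x) (some y) ∧ x - y = d)
    (hinv : obTranslate F (n : ZMod (2 * n)) = F)
    -- the cycle of `F` through `∞` has length 3
    (hinf3 : (F.connectedComponentMk none).supp.ncard = 3)
    -- `r` is the number of even-length cycles of `F`
    (r : ℕ) (hr : r = {c : F.ConnectedComponent | Even c.supp.ncard}.ncard) :
    n % 4 = 0 ∨ Even ((n - 1) / 2 + r) := by
  rcases Nat.eq_zero_or_pos n with rfl | hn
  · exact Or.inl rfl
  have : NeZero n := ⟨hn.ne'⟩
  have h8 := natCast_two_mul_eq_card_fixedComponents hinv hreg hdiff hinf3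
  have h2 := natCast_ncard_even_eq_card_fixedComponents hinv hinf3
  rw [← hr, ZMod.natCast_eq_natCast_iff'] at h2
  set f := #(fixedComponents hinv)
  rw [show (f : ZMod 8) * (4 * n) = ((f * (4 * n) : ℕ) : ZMod 8) by push_cast; rfl,
    ZMod.natCast_eq_natCast_iff'] at h8
  rw [Nat.even_iff]
  obtain ⟨q, rfl | rfl⟩ := Nat.even_or_odd' n
  · have : f * (4 * (2 * q)) = 8 * (f * q) := by ring
    omega
  · have : f * (4 * (2 * q + 1)) = 8 * (f * q) + 4 * f := by ring
    omega

theorem stmt7 (n : ℕ) (hn : 0 < n) (F : SimpleGraph (Option (ZMod (2 * n))))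
    (hreg : ∀ v, (F.neighborSet v).ncard = 2)
    (hdiff : ∀ d : ZMod (2 * n), d ≠ 0 →
      ∃ x y : ZMod (2 * n), F.Adj (some x) (some y) ∧ x - y = d)
    (hinv : obTranslate F (n : ZMod (2 * n)) = F)
    -- the cycle of `F` through `∞` has length 3
    (hinf3 : (F.connectedComponentMk none).supp.ncard = 3)
    -- `r` is the number of even-length cycles of `F`
    (r : ℕ) (hr : r = {c : F.ConnectedComponent | Even c.supp.ncard}.ncard) :
    n % 4 = 0 ∨ Even ((n - 1) / 2 + r) :=
  stmt7_general n F hreg hdiff hinv hinf3 r hr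
end

section
/- Let C be a cycle with vertex set contained in Z_{2n} ∪ {∞} such that C + n = C (translation by n fixing ∞, applied to vertices, maps C to itself as a graph). Then C has one of the following three forms: (a) C = (∞, c_1, …, c_m, c_m + n, c_{m−1} + n, …, c_1 + n); (b) C = (c_1, …, c_m, c_m + n, …, c_1 + n) with ∞ ∉ V(C); or (c) C = (c_1, …, c_m, c_1 + n, …, c_m + n) with ∞ ∉ V(C). -/
/-!
Index the cycle by `ZMod L`, `L = l.length`. Translation by `n` is an involution `σ` whose only
fixed point is `∞`, and as an automorphism of a cycle of length at least three it sends
consecutive vertices to consecutive vertices, hence acts on indices as `i ↦ a + i` or `i ↦ a - i`.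

A rotation by `a` has no fixed vertex, and `σ² = id` forces `2a = 0`: the second half of the cycle
is the translate of the first, form (c). A reflection `i ↦ a - i` fixes the vertices with
`2i = a`. If `∞` lies on the cycle it is such a vertex; rotating it to the front, the rest of the
list is reversed by `σ`, form (a). Otherwise `a` is odd and, after rotating the axis between the
last and the first entry, the whole list is reversed by `σ`, form (b). A list reversed by a
fixed-point-free `σ` has even length and is `xs ++ reverse (σ xs)`.
-/

/-- The cycle graph on a (cyclic) list of vertices: consecutive entries
(and the last with the first) are adjacent. -/
def cycleGraph {V : Type} (l : List V) : SimpleGraph V :=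
  SimpleGraph.fromEdgeSet {e | ∃ p ∈ l.zip (l.rotate 1), e = s(p.1, p.2)}

open Function

theorem ZMod.natCast_ne_zero_of_pos_of_lt {L k : ℕ} (h0 : 0 < k) (hk : k < L) :
    (k : ZMod L) ≠ 0 := fun h =>
  absurd (Nat.le_of_dvd h0 ((ZMod.natCast_eq_zero_iff _ _).1 h)) (by omega)

theorem ZMod.forall_eq_add_or_forall_eq_sub {L : ℕ} (h2 : (2 : ZMod L) ≠ 0)
    {f : ZMod L → ZMod L} (hf : Injective f)
    (hstep : ∀ i, f (i + 1) = f i + 1 ∨ f (i + 1) = f i - 1) :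
    (∀ i, f i = f 0 + i) ∨ (∀ i, f i = f 0 - i) := by
  have hsecond : ∀ i, f (i + 1 + 1) = 2 * f (i + 1) - f i := by
    intro i
    have hturn : f (i + 1 + 1) ≠ f i := fun h => h2 (by linear_combination hf h)
    rcases hstep i with h | h <;> rcases hstep (i + 1) with h' | h'
    · rw [h', h]; ring
    · exact absurd (by rw [h', h]; ring) hturn
    · exact absurd (by rw [h', h]; ring) hturn
    · rw [h', h]; ring
  set d := f 1 - f 0
  have haffine : ∀ k : ℤ, f k = f 0 + k * d ∧ f (k + 1) = f 0 + (k + 1) * d := by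
    intro k
    induction k using Int.induction_on with
    | zero => simp [d]
    | succ k ih =>
      push_cast at ih ⊢
      refine ⟨ih.2, ?_⟩
      rw [hsecond, ih.1, ih.2]
      ring
    | pred k ih =>
      push_cast at ih ⊢
      have := hsecond (-k - 1)
      simp only [sub_add_cancel] at this
      refine ⟨?_, by simpa only [sub_add_cancel] using ih.1⟩
      linear_combination this + 2 * ih.1 - ih.2
  have hd : d = 1 ∨ d = -1 := by
    rcases hstep 0 with h | h <;> simp only [zero_add] at h
    · exact Or.inl (by simp only [d, h]; ring)
    · exact Or.inr (by simp only [d, h]; ring)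
  have hlin : ∀ i, f i = f 0 + i * d := fun i => by
    obtain ⟨k, rfl⟩ := ZMod.intCast_surjective i
    exact (haffine k).1
  rcases hd with hd | hd
  · exact Or.inl fun i => by rw [hlin, hd, mul_one]
  · exact Or.inr fun i => by rw [hlin, hd, mul_neg_one, sub_eq_add_neg]

namespace List

variable {V : Type*}

theorem exists_eq_map_some {l : List (Option V)} (h : none ∉ l) :
    ∃ cs : List V, l = cs.map some := by
  induction l with
  | nil => exact ⟨[], rfl⟩
  | cons a t ih =>
    simp only [mem_cons, not_or] at h
    obtain ⟨ha, ht⟩ := h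
    obtain ⟨c, rfl⟩ := Option.ne_none_iff_exists'.1 (Ne.symm ha)
    obtain ⟨cs, rfl⟩ := ih ht
    exact ⟨c :: cs, rfl⟩

theorem exists_eq_append_reverse_map_of_map_eq_reverse {σ : V → V} {l : List V}
    (h : l.map σ = l.reverse) (hfix : ∀ x ∈ l, σ x ≠ x) :
    ∃ xs, l = xs ++ (xs.map σ).reverse := by
  set m := l.length / 2
  have hm : l.length = m + m := by
    by_contra hodd
    have hmid : m < l.length := by omega
    apply hfix _ (getElem_mem hmid)
    have := congrArg (·[m]?) h
    simp only [getElem?_map, getElem?_reverse hmid, getElem?_eq_getElem hmid] at this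
    simpa [show l.length - 1 - m = m by omega, getElem?_eq_getElem hmid] using this
  refine ⟨l.take m, ?_⟩
  rw [← take_append_drop m l, map_append, reverse_append] at h
  have hdrop : drop m l = ((take m l).map σ).reverse := by
    rw [(append_inj h (by simp; omega)).1, reverse_reverse]
  rw [← hdrop, take_append_drop]

theorem exists_eq_append_map_of_map_eq_rotate {σ : V → V} {l : List V} {r : ℕ}
    (h : l.map σ = l.rotate r) (hσ : Involutive σ) (hnd : l.Nodup) (hfix : ∀ x ∈ l, σ x ≠ x) :
    ∃ xs, l = xs ++ xs.map σ := by
  rcases eq_or_ne l [] with rfl | hne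
  · exact ⟨[], rfl⟩
  have hL : 0 < l.length := length_pos_of_ne_nil hne
  rw [← rotate_mod] at h
  set s := r % l.length
  have hs : s < l.length := Nat.mod_lt _ hL
  have hs0 : s ≠ 0 := by
    intro h0
    rw [h0, rotate_zero] at h
    apply hfix _ (getElem_mem hL)
    have := congrArg (·[0]?) h
    simpa only [getElem?_map, getElem?_eq_getElem hL, Option.map_some, Option.some_inj] using this
  have hss : l.rotate (s + s) = l := by
    rw [← rotate_rotate, ← h, ← map_rotate, ← h, map_map, hσ.comp_self, map_id]
  have hL2 : l.length = s + s := by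
    rcases hnd.rotate_eq_self_iff.1 hss with h2 | h2
    · obtain ⟨c, hc⟩ := Nat.dvd_of_mod_eq_zero h2
      have : c < 2 := by nlinarith
      interval_cases c <;> omega
    · exact absurd h2 hne
  refine ⟨l.take s, ?_⟩
  rw [rotate_eq_drop_append_take hs.le] at h
  conv_lhs at h => rw [← take_append_drop s l, map_append]
  have hdrop := (append_inj h (by simp; omega)).1
  conv_lhs => rw [← take_append_drop s l, ← hdrop]

variable (l : List V) [NeZero l.length]

def cyclicGet (i : ZMod l.length) : V := l[i.val]'(ZMod.val_lt i)

theorem cyclicGet_natCast (j : ℕ) :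
    l.cyclicGet j = l[j % l.length]'(Nat.mod_lt _ (Nat.pos_of_neZero _)) := by
  simp only [cyclicGet, ZMod.val_natCast]

theorem cyclicGet_natCast_of_lt {j : ℕ} (hj : j < l.length) : l.cyclicGet j = l[j] := by
  simp only [cyclicGet_natCast, Nat.mod_eq_of_lt hj]

theorem getElem_rotate_eq_cyclicGet (r j : ℕ) (hj : j < (l.rotate r).length) :
    (l.rotate r)[j] = l.cyclicGet (j + r) := by
  rw [getElem_rotate, ← Nat.cast_add, cyclicGet_natCast]

theorem cyclicGet_injective {l : List V} [NeZero l.length] (hnd : l.Nodup) :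
    Injective l.cyclicGet := fun _ _ hij =>
  ZMod.val_injective _ (hnd.getElem_inj_iff.1 hij)

theorem exists_cyclicGet_eq_iff {x : V} : (∃ i, l.cyclicGet i = x) ↔ x ∈ l := by
  rw [mem_iff_getElem]
  constructor
  · rintro ⟨i, rfl⟩
    exact ⟨i.val, ZMod.val_lt i, rfl⟩
  · rintro ⟨j, hj, rfl⟩
    exact ⟨j, cyclicGet_natCast_of_lt l hj⟩

theorem mem_zip_rotate_one_iff {p : V × V} :
    p ∈ l.zip (l.rotate 1) ↔ ∃ i, p = (l.cyclicGet i, l.cyclicGet (i + 1)) := by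
  rw [mem_iff_getElem]
  simp only [length_zip, length_rotate, min_self, getElem_zip, getElem_rotate_eq_cyclicGet]
  constructor
  · rintro ⟨j, hj, rfl⟩
    exact ⟨j, by rw [cyclicGet_natCast_of_lt l hj, Nat.cast_one]⟩
  · rintro ⟨i, rfl⟩
    exact ⟨i.val, ZMod.val_lt i, by rw [ZMod.natCast_zmod_val, Nat.cast_one]; rfl⟩

end List

section

variable {V : Type}

theorem cycleGraph_rotate (l : List V) (r : ℕ) : cycleGraph (l.rotate r) = cycleGraph l := by
  have hzip : (l.rotate r).zip ((l.rotate r).rotate 1) = (l.zip (l.rotate 1)).rotate r := by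
    rw [List.rotate_rotate, add_comm, ← List.rotate_rotate]
    exact (List.zipWith_rotate_distrib _ _ _ _ (List.length_rotate _ _).symm).symm
  simp only [cycleGraph, hzip, List.mem_rotate]

variable {l : List V} [NeZero l.length]

theorem cycleGraph_adj_iff {u v : V} :
    (cycleGraph l).Adj u v ↔ u ≠ v ∧ ∃ i, s(u, v) = s(l.cyclicGet i, l.cyclicGet (i + 1)) := by
  simp only [cycleGraph, SimpleGraph.fromEdgeSet_adj, Set.mem_ofPred_eq,
    List.mem_zip_rotate_one_iff]
  constructor
  · rintro ⟨⟨p, ⟨i, rfl⟩, he⟩, hne⟩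
    exact ⟨hne, i, he⟩
  · rintro ⟨hne, i, he⟩
    exact ⟨⟨_, ⟨i, rfl⟩, he⟩, hne⟩

theorem exists_cyclicGet_eq_of_adj {u v : V} (h : (cycleGraph l).Adj u v) :
    ∃ i, l.cyclicGet i = u := by
  obtain ⟨-, i, he⟩ := cycleGraph_adj_iff.1 h
  rcases Sym2.eq_iff.1 he with ⟨rfl, -⟩ | ⟨rfl, -⟩
  exacts [⟨i, rfl⟩, ⟨i + 1, rfl⟩]

theorem cycleGraph_adj_cyclicGet_iff (hnd : l.Nodup) (h1 : (1 : ZMod l.length) ≠ 0)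
    {i j : ZMod l.length} :
    (cycleGraph l).Adj (l.cyclicGet i) (l.cyclicGet j) ↔ j = i + 1 ∨ i = j + 1 := by
  have hinj := List.cyclicGet_injective hnd
  rw [cycleGraph_adj_iff, hinj.ne_iff]
  constructor
  · rintro ⟨-, k, he⟩
    rcases Sym2.eq_iff.1 he with ⟨hi, hj⟩ | ⟨hi, hj⟩
    · exact Or.inl (by rw [hinj hi, hinj hj])
    · exact Or.inr (by rw [hinj hi, hinj hj])
  · rintro (rfl | rfl)
    · exact ⟨fun h => h1 (by simpa using h.symm), i, rfl⟩
    · exact ⟨fun h => h1 (by simpa using h), j, Sym2.eq_swap⟩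

theorem exists_cyclicGet_eq_add_or_sub (hnd : l.Nodup) (h3 : 3 ≤ l.length) {σ : V → V}
    (hσ : Injective σ) (hadj : ∀ u v, (cycleGraph l).Adj u v → (cycleGraph l).Adj (σ u) (σ v)) :
    ∃ a, (∀ i, σ (l.cyclicGet i) = l.cyclicGet (a + i)) ∨
      (∀ i, σ (l.cyclicGet i) = l.cyclicGet (a - i)) := by
  have h1 : (1 : ZMod l.length) ≠ 0 := by
    exact_mod_cast ZMod.natCast_ne_zero_of_pos_of_lt one_pos (by omega)
  have h2 : (2 : ZMod l.length) ≠ 0 := by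
    exact_mod_cast ZMod.natCast_ne_zero_of_pos_of_lt two_pos (by omega)
  have hinj := List.cyclicGet_injective hnd
  have hsucc : ∀ i, (cycleGraph l).Adj (l.cyclicGet i) (l.cyclicGet (i + 1)) := fun i =>
    (cycleGraph_adj_cyclicGet_iff hnd h1).2 (Or.inl rfl)
  choose π hπ using fun i => exists_cyclicGet_eq_of_adj (hadj _ _ (hsucc i))
  have hπinj : Injective π := fun i j hij => hinj (hσ (by rw [← hπ, ← hπ, hij]))
  have hπstep : ∀ i, π (i + 1) = π i + 1 ∨ π (i + 1) = π i - 1 := by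
    intro i
    have := hadj _ _ (hsucc i)
    rw [← hπ, ← hπ, cycleGraph_adj_cyclicGet_iff hnd h1] at this
    exact this.imp id fun h => by rw [h, add_sub_cancel_right]
  refine ⟨π 0, ?_⟩
  rcases ZMod.forall_eq_add_or_forall_eq_sub h2 hπinj hπstep with h | h
  exacts [Or.inl fun i => by rw [← hπ, h], Or.inr fun i => by rw [← hπ, h]]

variable {σ : V → V} {a : ZMod l.length}

theorem map_eq_rotate_of_cyclicGet (h : ∀ i, σ (l.cyclicGet i) = l.cyclicGet (a + i)) :
    l.map σ = l.rotate a.val := by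
  refine List.ext_getElem (by simp) fun j hj _ => ?_
  rw [List.getElem_map, ← List.cyclicGet_natCast_of_lt l (by simpa using hj), h,
    List.getElem_rotate_eq_cyclicGet, ZMod.natCast_zmod_val, add_comm]

theorem map_rotate_eq_reverse_rotate_of_cyclicGet
    (h : ∀ i, σ (l.cyclicGet i) = l.cyclicGet (a - i)) {s t : ℕ}
    (hst : (s + t : ZMod l.length) = a + 1) : (l.rotate s).map σ = (l.rotate t).reverse := by
  refine List.ext_getElem (by simp) fun j hj _ => ?_
  have hjL : j < l.length := by simpa using hj
  have hcast : ((l.length - 1 - j : ℕ) : ZMod l.length) = -1 - j := by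
    rw [Nat.sub_sub, Nat.cast_sub (by omega), ZMod.natCast_self]
    push_cast
    ring
  rw [List.getElem_map, List.getElem_reverse, List.getElem_rotate_eq_cyclicGet,
    List.getElem_rotate_eq_cyclicGet, h, List.length_rotate, hcast]
  congr 1
  linear_combination -hst

variable {x₀ : V}

theorem exists_eq_append_map_of_cyclicGet (hnd : l.Nodup) (h2 : 2 ≤ l.length)
    (hσ : Involutive σ) (hfix : ∀ x, σ x = x ↔ x = x₀)
    (h : ∀ i, σ (l.cyclicGet i) = l.cyclicGet (a + i)) :
    x₀ ∉ l ∧ ∃ xs, x₀ ∉ xs ∧ l = xs ++ xs.map σ := by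
  have hinj := List.cyclicGet_injective hnd
  have hnofix : ∀ x ∈ l, σ x ≠ x := by
    intro x hx hfx
    obtain ⟨i, rfl⟩ := (List.exists_cyclicGet_eq_iff l).2 hx
    have ha : a = 0 := by linear_combination hinj ((h i).symm.trans hfx)
    have hall : ∀ j, l.cyclicGet j = x₀ := fun j => (hfix _).1 (by rw [h, ha, zero_add])
    have h1 : (1 : ZMod l.length) ≠ 0 := by
      exact_mod_cast ZMod.natCast_ne_zero_of_pos_of_lt one_pos h2
    exact h1 (hinj ((hall 1).trans (hall 0).symm))
  have hx₀ : x₀ ∉ l := fun hx => hnofix x₀ hx ((hfix x₀).2 rfl)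
  obtain ⟨xs, hxs⟩ :=
    List.exists_eq_append_map_of_map_eq_rotate (map_eq_rotate_of_cyclicGet h) hσ hnd hnofix
  exact ⟨hx₀, xs, fun hx => hx₀ (hxs ▸ List.mem_append_left _ hx), hxs⟩

theorem exists_rotate_eq_cons_append_reverse_map_of_cyclicGet (hnd : l.Nodup)
    (hfix : ∀ x, σ x = x ↔ x = x₀) (h : ∀ i, σ (l.cyclicGet i) = l.cyclicGet (a - i))
    (hx₀ : x₀ ∈ l) : ∃ r xs, x₀ ∉ xs ∧ l.rotate r = x₀ :: (xs ++ (xs.map σ).reverse) := by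
  obtain ⟨k, hk⟩ := (List.exists_cyclicGet_eq_iff l).2 hx₀
  have hak : a = k + k := by
    linear_combination List.cyclicGet_injective hnd ((h k).symm.trans ((hfix _).2 hk))
  obtain ⟨y, t, hyt⟩ := List.exists_cons_of_ne_nil
    (List.ne_nil_of_length_pos (by simpa using Nat.pos_of_neZero l.length) :
      l.rotate k.val ≠ [])
  have hy : y = x₀ := by
    have := List.getElem_rotate_eq_cyclicGet l k.val 0 (by simp [Nat.pos_of_neZero])
    simpa [hyt, hk] using this
  subst hy
  have hrefl := map_rotate_eq_reverse_rotate_of_cyclicGet h (s := k.val) (t := k.val + 1)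
    (by rw [hak]; push_cast; rw [ZMod.natCast_zmod_val]; ring)
  rw [← List.rotate_rotate, hyt] at hrefl
  have ht : t.map σ = t.reverse := (by simpa using hrefl : _ ∧ _).2
  have hnd' : (y :: t).Nodup := hyt ▸ List.nodup_rotate.2 hnd
  obtain ⟨hyt', -⟩ := List.nodup_cons.1 hnd'
  obtain ⟨xs, hxs⟩ := List.exists_eq_append_reverse_map_of_map_eq_reverse ht
    fun x hx hfx => hyt' ((hfix x).1 hfx ▸ hx)
  exact ⟨k.val, xs, fun hx => hyt' (hxs ▸ List.mem_append_left _ hx), by rw [hyt, hxs]⟩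

theorem exists_rotate_eq_append_reverse_map_of_cyclicGet (hfix : ∀ x, σ x = x ↔ x = x₀)
    (h : ∀ i, σ (l.cyclicGet i) = l.cyclicGet (a - i)) (hx₀ : x₀ ∉ l) :
    ∃ r xs, x₀ ∉ xs ∧ l.rotate r = xs ++ (xs.map σ).reverse := by
  have hnofix : ∀ x ∈ l, σ x ≠ x := fun x hx hfx => hx₀ ((hfix x).1 hfx ▸ hx)
  have hodd : a.val % 2 = 1 := by
    by_contra heven
    set q := a.val / 2
    have hq : a - q = q := by
      rw [← ZMod.natCast_zmod_val a, show a.val = q + q by omega]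
      push_cast
      ring
    exact hnofix _ (List.getElem_mem (ZMod.val_lt (q : ZMod l.length)))
      (by rw [← List.cyclicGet, h, hq])
  set s := a.val / 2 + 1
  have hs : (s + s : ZMod l.length) = a + 1 := by
    rw [← ZMod.natCast_zmod_val a]
    norm_cast
    congr 1
    omega
  obtain ⟨xs, hxs⟩ := List.exists_eq_append_reverse_map_of_map_eq_reverse
    (map_rotate_eq_reverse_rotate_of_cyclicGet h hs) fun x hx => hnofix x (List.mem_rotate.1 hx)
  exact ⟨s, xs, fun hx => hx₀ (List.mem_rotate.1 (hxs ▸ List.mem_append_left _ hx)), hxs⟩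

end

theorem exists_cycleGraph_eq_of_involutive {V : Type} {l : List V} (hnd : l.Nodup)
    (h3 : 3 ≤ l.length) {σ : V → V} {x₀ : V} (hσ : Involutive σ)
    (hfix : ∀ x, σ x = x ↔ x = x₀)
    (hadj : ∀ u v, (cycleGraph l).Adj u v → (cycleGraph l).Adj (σ u) (σ v)) :
    (∃ xs, x₀ ∉ xs ∧ cycleGraph l = cycleGraph (x₀ :: (xs ++ (xs.map σ).reverse))) ∨
    (x₀ ∉ l ∧ ∃ xs, x₀ ∉ xs ∧ cycleGraph l = cycleGraph (xs ++ (xs.map σ).reverse)) ∨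
    (x₀ ∉ l ∧ ∃ xs, x₀ ∉ xs ∧ cycleGraph l = cycleGraph (xs ++ xs.map σ)) := by
  have : NeZero l.length := ⟨by omega⟩
  obtain ⟨a, hrot | hrefl⟩ := exists_cyclicGet_eq_add_or_sub hnd h3 hσ.injective hadj
  · obtain ⟨hx₀, xs, hxs, hl⟩ := exists_eq_append_map_of_cyclicGet hnd (by omega) hσ hfix hrot
    exact Or.inr (Or.inr ⟨hx₀, xs, hxs, by rw [← hl]⟩)
  by_cases hx₀ : x₀ ∈ l
  · obtain ⟨r, xs, hxs, hl⟩ :=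
      exists_rotate_eq_cons_append_reverse_map_of_cyclicGet hnd hfix hrefl hx₀
    exact Or.inl ⟨xs, hxs, by rw [← hl, cycleGraph_rotate]⟩
  · obtain ⟨r, xs, hxs, hl⟩ := exists_rotate_eq_append_reverse_map_of_cyclicGet hfix hrefl hx₀
    exact Or.inr (Or.inl ⟨hx₀, xs, hxs, by rw [← hl, cycleGraph_rotate]⟩)

theorem stmt8 (n : ℕ) (hn : 0 < n) (C : SimpleGraph (Option (ZMod (2 * n))))
    (l : List (Option (ZMod (2 * n)))) (hnd : l.Nodup) (hlen : 3 ≤ l.length)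
    (hC : C = cycleGraph l)
    (hinv : C.map (Equiv.optionCongr (Equiv.addRight (n : ZMod (2 * n)))).toEmbedding = C) :
    -- (a) C = (∞, c_1, …, c_m, c_m + n, …, c_1 + n)
    (∃ cs : List (ZMod (2 * n)), C = cycleGraph
      ((none : Option (ZMod (2 * n))) :: (cs.map some ++
        ((cs.map (· + (n : ZMod (2 * n)))).reverse.map some)))) ∨
    -- (b) C = (c_1, …, c_m, c_m + n, …, c_1 + n), ∞ ∉ V(C)
    (∃ cs : List (ZMod (2 * n)), none ∉ l ∧ C = cycleGraph
      (cs.map some ++ ((cs.map (· + (n : ZMod (2 * n)))).reverse.map some))) ∨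
    -- (c) C = (c_1, …, c_m, c_1 + n, …, c_m + n), ∞ ∉ V(C)
    (∃ cs : List (ZMod (2 * n)), none ∉ l ∧ C = cycleGraph
      (cs.map some ++ (cs.map (· + (n : ZMod (2 * n)))).map some)) := by
  set e := Equiv.optionCongr (Equiv.addRight (n : ZMod (2 * n)))
  have hn0 : (n : ZMod (2 * n)) ≠ 0 := ZMod.natCast_ne_zero_of_pos_of_lt hn (by omega)
  have hnn : (n : ZMod (2 * n)) + n = 0 := by simpa [two_mul] using ZMod.natCast_self (2 * n)
  have he : Involutive e := by
    rintro (_ | c)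
    · rfl
    · simp [e, add_assoc, hnn]
  have hfix : ∀ x, e x = x ↔ x = none := by
    rintro (_ | c)
    · simp [e]
    · simpa [e] using hn0
  have hadj : ∀ u v, C.Adj u v → C.Adj (e u) (e v) := fun u v h => by
    rw [← hinv]
    exact SimpleGraph.map_adj_apply.2 h
  have hmap : ∀ cs : List (ZMod (2 * n)),
      (cs.map some).map e = (cs.map (· + (n : ZMod (2 * n)))).map some := by
    intro cs
    simp [e, Function.comp_def]
  subst hC
  rcases exists_cycleGraph_eq_of_involutive hnd hlen he hfix hadj with
    ⟨xs, hxs, h⟩ | ⟨hl, xs, hxs, h⟩ | ⟨hl, xs, hxs, h⟩ <;>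
    obtain ⟨cs, rfl⟩ := List.exists_eq_map_some hxs <;> rw [hmap] at h
  · exact Or.inl ⟨cs, by rw [h, List.map_reverse]⟩
  · exact Or.inr (Or.inl ⟨cs, hl, by rw [h, List.map_reverse]⟩)
  · exact Or.inr (Or.inr ⟨cs, hl, h⟩)
end

section
/- If a cycle C with vertices in Z_{2n} ∪ {∞} satisfies C + n = C and ∞ ∈ V(C), then the length of C is odd. -/
/-!
Translation by `n` fixes `∞` and is an involution of `ℤ/2n ∪ {∞}` without other fixed points.
As a symmetry of `C` it permutes the vertex set of `C`, whose finite vertices therefore split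
into pairs `{c, c + n}`; together with `∞` this leaves an odd number of vertices.
-/

open Finset

theorem Finset.odd_card_of_involution {α : Type*} [DecidableEq α] {s : Finset α} {f : α → α}
    (hmaps : Set.MapsTo f s s) (hf : ∀ x ∈ s, f (f x) = x) {a : α} (ha : a ∈ s)
    (hfix : ∀ x ∈ s, f x = x ↔ x = a) : Odd #s := by
  have hpaired : Even #(s.erase a) := by
    -- in `ZMod 2` each pair `{x, f x}` contributes `1 + 1 = 0`
    rw [← ZMod.natCast_eq_zero_iff_even, card_eq_sum_ones, Nat.cast_sum, Nat.cast_one]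
    refine sum_involution (fun x _ => f x) (fun _ _ => by decide) ?_ ?_ ?_
    · intro x hx _ hfx
      exact (mem_erase.1 hx).1 ((hfix x (mem_of_mem_erase hx)).1 hfx)
    · intro x hx
      obtain ⟨hxa, hxs⟩ := mem_erase.1 hx
      refine mem_erase.2 ⟨fun hfxa => hxa ?_, hmaps hxs⟩
      rw [← hf x hxs, hfxa, (hfix a ha).2 rfl]
    · exact fun x hx => hf x (mem_of_mem_erase hx)
  rw [← card_erase_add_one ha]
  exact hpaired.add_one

theorem SimpleGraph.mapsTo_support_of_map_eq_self {V : Type*} {G : SimpleGraph V} {f : V ↪ V}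
    (h : G.map f = G) : Set.MapsTo f G.support G.support := by
  rintro v ⟨w, hvw⟩
  rw [← h]
  exact ⟨f w, SimpleGraph.map_adj_apply.2 hvw⟩

variable {V : Type} {l : List V}

theorem mem_of_cycleGraph_adj {x y : V} (h : (cycleGraph l).Adj x y) : x ∈ l := by
  obtain ⟨⟨p, hp, hxy⟩, -⟩ := h
  rcases Sym2.eq_iff.1 hxy with ⟨rfl, -⟩ | ⟨rfl, -⟩
  · exact (List.of_mem_zip hp).1
  · exact List.mem_rotate.1 (List.of_mem_zip hp).2

theorem cycleGraph_adj_getElem (hnd : l.Nodup) (hlen : 2 ≤ l.length) (i : ℕ)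
    (hi : i < l.length) :
    (cycleGraph l).Adj l[i] (l[(i + 1) % l.length]'(Nat.mod_lt _ (by omega))) := by
  have hne : l[i] ≠ l[(i + 1) % l.length]'(Nat.mod_lt _ (by omega)) := by
    rw [Ne, hnd.getElem_inj_iff]
    rcases Nat.lt_or_ge (i + 1) l.length with h | h
    · rw [Nat.mod_eq_of_lt h]; omega
    · rw [show i + 1 = l.length by omega, Nat.mod_self]; omega
  refine ⟨⟨(l[i], (l.rotate 1)[i]'(by simpa using hi)), ?_, ?_⟩, hne⟩
  · rw [← List.getElem_zip (i := i) (h := by simpa using hi)]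
    exact List.getElem_mem _
  · simp [List.getElem_rotate]

theorem support_cycleGraph (hnd : l.Nodup) (hlen : 2 ≤ l.length) :
    (cycleGraph l).support = {x | x ∈ l} := by
  ext x
  refine ⟨fun ⟨_, h⟩ => mem_of_cycleGraph_adj h, fun hx => ?_⟩
  obtain ⟨i, hi, rfl⟩ := List.getElem_of_mem hx
  exact ⟨_, cycleGraph_adj_getElem hnd hlen i hi⟩

theorem stmt9 (n : ℕ) (hn : 0 < n) (C : SimpleGraph (Option (ZMod (2 * n))))
    (l : List (Option (ZMod (2 * n)))) (hnd : l.Nodup) (hlen : 3 ≤ l.length)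
    (hC : C = cycleGraph l)
    (hinv : C.map (Equiv.optionCongr (Equiv.addRight (n : ZMod (2 * n)))).toEmbedding = C)
    (hinf : none ∈ l) :
    Odd l.length := by
  classical
  set e := Equiv.optionCongr (Equiv.addRight (n : ZMod (2 * n)))
  have hn0 : (n : ZMod (2 * n)) ≠ 0 := by
    rw [Ne, ZMod.natCast_eq_zero_iff]
    exact fun h => absurd (Nat.le_of_dvd hn h) (by omega)
  have hnn : (n : ZMod (2 * n)) + n = 0 := by
    rw [← Nat.cast_add, ← two_mul, ZMod.natCast_self]
  have hinvol : ∀ x, e (e x) = x := by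
    rintro (_ | a) <;> simp [e, add_assoc, hnn]
  have hfix : ∀ x, e x = x ↔ x = none := by
    rintro (_ | a) <;> simp [e, hn0]
  have hmaps : Set.MapsTo e l.toFinset l.toFinset := by
    have := SimpleGraph.mapsTo_support_of_map_eq_self hinv
    rw [hC, support_cycleGraph hnd (by omega)] at this
    simpa [Set.MapsTo] using this
  rw [← List.toFinset_card_of_nodup hnd]
  exact odd_card_of_involution hmaps (fun x _ => hinvol x) (List.mem_toFinset.2 hinf)
    fun x _ => hfix x
end

section
/- Let n be even and let F be a 2-regular graph of order 2n+1 on vertex set ({0,1} × Z_n) ∪ {∞} such that: the neighbours of ∞ are (0,x_0) and (1,x_1); F contains the path P with edges {(0,0),(0,n/2)}, {(0,n/2),(1,n/2)}, {(1,n/2),(1,0)} within one of its cycles; and Δ_{ij}(F − P) = Z_n \ {0, n/2} for each (i,j) ∈ {(0,0),(0,1),(1,1)}. Let F* be obtained from F by replacing P with the path P* with edges {(0,0),(1,n/2)}, {(1,n/2),(0,n/2)}, {(0,n/2),(1,0)}. Then {F + g : 1 ≤ g ≤ n/2} ∪ {F* + (n/2 + g) : 1 ≤ g ≤ n/2} is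 an edge-decomposition of K_{2n+1} into n copies of graphs isomorphic to F. -/
/-- The translate `F + g` of a graph on `({0,1} × Z_n) ∪ {∞}` (with `∞ = none` fixed). -/
def obTranslate2 {n : ℕ} (F : SimpleGraph (Option (Bool × ZMod n))) (g : ZMod n) :
    SimpleGraph (Option (Bool × ZMod n)) :=
  F.map (Equiv.optionCongr ((Equiv.refl Bool).prodCongr (Equiv.addRight g))).toEmbedding

/-- `n/2` as an element of `Z_n`. -/
def obHalf (n : ℕ) : ZMod n := ((n / 2 : ℕ) : ZMod n)

/-- The edges of the path `P = (0,0), (0,n/2), (1,n/2), (1,0)`. -/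
def pathP (n : ℕ) : Set (Sym2 (Option (Bool × ZMod n))) :=
  { s(some (false, 0), some (false, obHalf n)),
    s(some (false, obHalf n), some (true, obHalf n)),
    s(some (true, obHalf n), some (true, 0)) }

/-- The edges of the switched path `P* = (0,0), (1,n/2), (0,n/2), (1,0)`. -/
def pathPstar (n : ℕ) : Set (Sym2 (Option (Bool × ZMod n))) :=
  { s(some (false, 0), some (true, obHalf n)),
    s(some (true, obHalf n), some (false, obHalf n)),
    s(some (false, obHalf n), some (true, 0)) }

/-- `F*`: the graph obtained from `F` by replacing `P` with `P*`. -/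
def Fswitch {n : ℕ} (F : SimpleGraph (Option (Bool × ZMod n))) :
    SimpleGraph (Option (Bool × ZMod n)) :=
  (F.deleteEdges (pathP n)) ⊔ SimpleGraph.fromEdgeSet (pathPstar n)

/-!
Write `G = F − P`, so that `F = G ∪ P` and `F* = G ∪ P*`. The hypotheses on `Δ` say that every
edge of `G` has its difference outside `{0, n/2}` and that each of the `4(n − 2)` pairs
(type, difference) occurs among the ordered edges of `G` avoiding `∞`. There are only
`2 · (2n − 4)` such ordered edges, so each pair occurs exactly once. Hence an edge of `K_{2n+1}`
meeting `∞`, or with difference outside `{0, n/2}`, lies in `G + g` for exactly one `g ∈ Z_n`.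
The remaining edges are those inside a block `{0,1} × {x, x + n/2}`; for `1 ≤ g ≤ n/2` the
translates `P + g` and `P* + (g + n/2)` together form the complete graph on the block of `g`, so
these edges are covered exactly once by the paths. Finally, `(0, n/2)` and `(1, n/2)` are isolated
in `G`, and swapping them maps `P*` onto `P`, so `F* ≅ F`.
-/

open SimpleGraph Finset

namespace SimpleGraph

variable {V : Type*}

lemma deleteEdges_sup_fromEdgeSet_of_subset {G : SimpleGraph V} {s : Set (Sym2 V)}
    (hs : s ⊆ G.edgeSet) : G.deleteEdges s ⊔ fromEdgeSet s = G := by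
  rw [deleteEdges, sdiff_sup_self, sup_eq_left, fromEdgeSet_le]
  exact Set.sdiff_subset.trans hs

lemma map_equiv_adj (G : SimpleGraph V) (e : V ≃ V) (u v : V) :
    (G.map e.toEmbedding).Adj u v ↔ G.Adj (e.symm u) (e.symm v) := by
  simpa using map_adj_apply (G := G) (f := e.toEmbedding) (a := e.symm u) (b := e.symm v)

lemma degree_eq_ncard_neighborSet (G : SimpleGraph V) [Fintype V] [DecidableRel G.Adj] (v : V) :
    G.degree v = (G.neighborSet v).ncard := by
  rw [← card_neighborSet_eq_degree, Set.ncard_eq_toFinset_card', Set.toFinset_card]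

lemma adj_swap_iff_of_isolated {H : SimpleGraph V} [DecidableEq V] {a b : V}
    (ha : ∀ w, ¬H.Adj a w) (hb : ∀ w, ¬H.Adj b w) (u v : V) :
    H.Adj (Equiv.swap a b u) (Equiv.swap a b v) ↔ H.Adj u v := by
  have ha' : ∀ w, ¬H.Adj w a := fun w h => ha w h.symm
  have hb' : ∀ w, ¬H.Adj w b := fun w h => hb w h.symm
  simp only [Equiv.swap_apply_def]
  split_ifs <;> simp_all

def Iso.supFromEdgeSetImage (H : SimpleGraph V) (e : V ≃ V)
    (he : ∀ u v, H.Adj (e u) (e v) ↔ H.Adj u v) (S : Set (Sym2 V)) :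
    H ⊔ fromEdgeSet S ≃g H ⊔ fromEdgeSet (Sym2.map e '' S) :=
  ⟨e, fun {u v} => by
    simp only [sup_adj, fromEdgeSet_adj, he, ← Sym2.map_mk,
      (Sym2.map.injective e.injective).mem_set_image, ne_eq, EmbeddingLike.apply_eq_iff_eq]⟩

lemma not_adj_deleteEdges_of_neighborSet {F : SimpleGraph V} {s : Set (Sym2 V)} {v a b : V}
    (hv : (F.neighborSet v).ncard = 2) (ha : F.Adj v a) (hb : F.Adj v b) (hab : a ≠ b)
    (hsa : s(v, a) ∈ s) (hsb : s(v, b) ∈ s) (w : V) : ¬(F.deleteEdges s).Adj v w := by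
  have hN : {a, b} = F.neighborSet v :=
    Set.eq_of_subset_of_ncard_le (by rintro _ (rfl | rfl) <;> assumption)
      (by rw [hv, Set.ncard_pair hab]) (Set.finite_of_ncard_ne_zero (by omega))
  intro h
  rw [deleteEdges_adj] at h
  have hw : w ∈ F.neighborSet v := h.1
  rw [← hN] at hw
  obtain rfl | rfl := hw
  exacts [h.2 hsa, h.2 hsb]

lemma card_adj_some_add_two_mul_degree_none {α : Type*} [Fintype α] [DecidableEq α]
    (G : SimpleGraph (Option α)) [DecidableRel G.Adj] :
    #{x : α × α | G.Adj (some x.1) (some x.2)} + 2 * G.degree none = 2 * #G.edgeFinset := by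
  have hdeg : ∀ v, G.degree v = ∑ w, if G.Adj v w then 1 else 0 := by
    intro v
    rw [← card_neighborFinset_eq_degree, neighborFinset_eq_filter, card_filter]
  have hcomm : ∑ p : α, (if G.Adj (some p) none then 1 else 0) = G.degree none := by
    simp only [hdeg none, Fintype.sum_option, G.adj_comm (some _) none, G.irrefl, if_false,
      zero_add]
  rw [← sum_degrees_eq_twice_card_edges, Fintype.sum_option, card_filter, Fintype.sum_prod_type]
  simp only [hdeg (some _), Fintype.sum_option, sum_add_distrib, hcomm]
  rw [hdeg none, Fintype.sum_option]
  simp only [G.irrefl, if_false]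
  omega

end SimpleGraph

variable {n : ℕ}

def translateEquiv (g : ZMod n) : Option (Bool × ZMod n) ≃ Option (Bool × ZMod n) :=
  Equiv.optionCongr ((Equiv.refl Bool).prodCongr (Equiv.addRight g))

@[simp] lemma translateEquiv_symm_none (g : ZMod n) : (translateEquiv g).symm none = none := rfl

@[simp] lemma translateEquiv_symm_some (g : ZMod n) (i : Bool) (x : ZMod n) :
    (translateEquiv g).symm (some (i, x)) = some (i, x - g) := by
  simp [translateEquiv, Equiv.optionCongr, sub_eq_add_neg]

lemma obTranslate2_adj (F : SimpleGraph (Option (Bool × ZMod n))) (g : ZMod n)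
    (u v : Option (Bool × ZMod n)) :
    (obTranslate2 F g).Adj u v ↔ F.Adj ((translateEquiv g).symm u) ((translateEquiv g).symm v) :=
  map_equiv_adj F (translateEquiv g) u v

lemma obHalf_add_obHalf (hn : Even n) : obHalf n + obHalf n = 0 := by
  rw [obHalf, ← Nat.cast_add, ← two_mul, Nat.two_mul_div_two_of_even hn, ZMod.natCast_self]

lemma neg_obHalf (hn : Even n) : -obHalf n = obHalf n :=
  neg_eq_of_add_eq_zero_left (obHalf_add_obHalf hn)

lemma val_obHalf (hpos : 0 < n) : (obHalf n).val = n / 2 := by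
  rw [obHalf, ZMod.val_natCast, Nat.mod_eq_of_lt (by omega)]

def IsFirstHalf (g : ZMod n) : Prop := 1 ≤ g.val ∧ g.val ≤ n / 2

instance : DecidablePred (IsFirstHalf (n := n)) :=
  fun _ => inferInstanceAs (Decidable (_ ∧ _))

lemma isFirstHalf_add_obHalf (hn : Even n) (hpos : 0 < n) (g : ZMod n) :
    IsFirstHalf (g + obHalf n) ↔ ¬IsFirstHalf g := by
  have : NeZero n := ⟨hpos.ne'⟩
  obtain ⟨k, rfl⟩ := hn
  have hg := g.val_lt
  have hk : (k + k) / 2 = k := by omega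
  rw [IsFirstHalf, IsFirstHalf, ZMod.val_add, val_obHalf hpos, hk]
  rcases lt_or_ge (g.val + k) (k + k) with h | h
  · rw [Nat.mod_eq_of_lt h]; omega
  · rw [Nat.mod_eq_sub_mod h, Nat.mod_eq_of_lt (by omega)]; omega

lemma existsUnique_isFirstHalf_iff (hn : Even n) (hpos : 0 < n) (b : Prop) (x : ZMod n) :
    ∃! g : ZMod n, (IsFirstHalf g ↔ b) ∧ (g = x ∨ g = x + obHalf n) := by
  have hx := isFirstHalf_add_obHalf hn hpos x
  by_cases hb : (IsFirstHalf x ↔ b)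
  · refine ⟨x, ⟨hb, .inl rfl⟩, ?_⟩
    rintro g ⟨hg, rfl | rfl⟩ <;> tauto
  · refine ⟨x + obHalf n, ⟨by tauto, .inr rfl⟩, ?_⟩
    rintro g ⟨hg, rfl | rfl⟩ <;> tauto

def shiftOfIndex (p : {p : ℕ × Bool // 1 ≤ p.1 ∧ p.1 ≤ n / 2}) : ZMod n :=
  cond p.1.2 (p.1.1 : ZMod n) ((n / 2 + p.1.1 : ℕ) : ZMod n)

lemma val_shiftOfIndex (hn : Even n) (p : {p : ℕ × Bool // 1 ≤ p.1 ∧ p.1 ≤ n / 2}) :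
    (shiftOfIndex p).val = cond p.1.2 p.1.1 (if p.1.1 = n / 2 then 0 else n / 2 + p.1.1) := by
  obtain ⟨⟨q, b⟩, hq1, hq2⟩ := p
  obtain ⟨k, rfl⟩ := hn
  cases b <;> simp only [shiftOfIndex, cond, ZMod.val_natCast]
  · split_ifs with h
    · rw [show (k + k) / 2 + q = k + k by omega, Nat.mod_self]
    · exact Nat.mod_eq_of_lt (by omega)
  · exact Nat.mod_eq_of_lt (by omega)

lemma isFirstHalf_shiftOfIndex_iff (hn : Even n) (p : {p : ℕ × Bool // 1 ≤ p.1 ∧ p.1 ≤ n / 2}) :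
    IsFirstHalf (shiftOfIndex p) ↔ p.1.2 = true := by
  obtain ⟨⟨q, b⟩, hq1, hq2⟩ := p
  rw [IsFirstHalf, val_shiftOfIndex hn]
  cases b <;> dsimp only [cond] at * <;> try split_ifs
  all_goals simp only [iff_true, iff_false, not_and, not_le]; omega

lemma shiftOfIndex_bijective (hn : Even n) (hpos : 0 < n) :
    Function.Bijective (shiftOfIndex (n := n)) := by
  have : NeZero n := ⟨hpos.ne'⟩
  constructor
  · rintro ⟨⟨q, b⟩, hq⟩ ⟨⟨q', b'⟩, hq'⟩ h
    have h' := congrArg ZMod.val h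
    rw [val_shiftOfIndex hn, val_shiftOfIndex hn] at h'
    cases b <;> cases b' <;> dsimp only [cond] at h' hq hq' <;> (try split_ifs at h') <;>
      simp only [Subtype.mk.injEq, Prod.mk.injEq, and_true, reduceCtorEq, and_false] <;> omega
  · intro g
    have hg := g.val_lt
    have hval : ∀ p, (shiftOfIndex p).val = g.val → shiftOfIndex p = g :=
      fun p h => ZMod.val_injective n h
    obtain ⟨k, rfl⟩ := hn
    rcases Nat.lt_or_ge k g.val with h | h
    · refine ⟨⟨(g.val - k, false), by omega⟩, hval _ ?_⟩
      rw [val_shiftOfIndex ⟨k, rfl⟩]; dsimp only [cond]; split_ifs <;> omega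
    rcases Nat.eq_zero_or_pos g.val with h0 | h0
    · refine ⟨⟨(k, false), by omega⟩, hval _ ?_⟩
      rw [val_shiftOfIndex ⟨k, rfl⟩]; dsimp only [cond]; split_ifs <;> omega
    · refine ⟨⟨(g.val, true), by omega⟩, hval _ ?_⟩
      rw [val_shiftOfIndex ⟨k, rfl⟩]; rfl

lemma existsUnique_shiftOfIndex {β : Type*} (hn : Even n) (hpos : 0 < n) (Q : β → Prop)
    {X Y : ZMod n → β} (h : ∃! g, (IsFirstHalf g ∧ Q (X g)) ∨ (¬IsFirstHalf g ∧ Q (Y g))) :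
    ∃! p : ℕ × Bool, (1 ≤ p.1 ∧ p.1 ≤ n / 2) ∧
      Q (cond p.2 (X (p.1 : ZMod n)) (Y ((n / 2 + p.1 : ℕ) : ZMod n))) := by
  rw [(shiftOfIndex_bijective hn hpos).existsUnique_iff] at h
  obtain ⟨⟨p, hp⟩, hZ, huniq⟩ := h
  have key : ∀ p : {p : ℕ × Bool // 1 ≤ p.1 ∧ p.1 ≤ n / 2},
      ((IsFirstHalf (shiftOfIndex p) ∧ Q (X (shiftOfIndex p))) ∨
        (¬IsFirstHalf (shiftOfIndex p) ∧ Q (Y (shiftOfIndex p)))) ↔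
      Q (cond p.1.2 (X (p.1.1 : ZMod n)) (Y ((n / 2 + p.1.1 : ℕ) : ZMod n))) := by
    intro p
    have := isFirstHalf_shiftOfIndex_iff hn p
    obtain ⟨⟨q, b⟩, hq⟩ := p
    cases b <;> simp_all [shiftOfIndex]
  exact ⟨p, ⟨hp, (key ⟨p, hp⟩).mp hZ⟩,
    fun p' ⟨hp', hQ⟩ => congrArg Subtype.val (huniq ⟨p', hp'⟩ ((key _).mpr hQ))⟩

/-- `u` and `v` lie in a common block `{0,1} × {x, x + n/2}`. -/
def SameBlock : Option (Bool × ZMod n) → Option (Bool × ZMod n) → Prop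
  | some (_, x), some (_, y) => x - y = 0 ∨ x - y = obHalf n
  | _, _ => False

/-- The member of the family translated by `g` is `(F − P) ∪ switchedPath g`, translated by `g`. -/
def switchedPath (g : ZMod n) : Set (Sym2 (Option (Bool × ZMod n))) :=
  if IsFirstHalf g then pathP n else pathPstar n

lemma sameBlock_translate_iff (g : ZMod n) (u v : Option (Bool × ZMod n)) :
    SameBlock ((translateEquiv g).symm u) ((translateEquiv g).symm v) ↔ SameBlock u v := by
  rcases u with _ | ⟨i, x⟩ <;> rcases v with _ | ⟨j, y⟩ <;> simp [SameBlock]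

lemma sameBlock_of_mem_switchedPath (hn : Even n) {g : ZMod n} {u v : Option (Bool × ZMod n)}
    (h : s(u, v) ∈ switchedPath g) : SameBlock u v := by
  unfold switchedPath pathP pathPstar at h
  split_ifs at h <;> rcases h with h | h | h <;>
    rcases Sym2.eq_iff.mp h with ⟨rfl, rfl⟩ | ⟨rfl, rfl⟩ <;> simp [SameBlock, neg_obHalf hn]

lemma existsUnique_mem_switchedPath (hn : Even n) (hpos : 0 < n) (h0 : obHalf n ≠ 0)
    {u v : Option (Bool × ZMod n)} (huv : u ≠ v) (hb : SameBlock u v) :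
    ∃! g, s((translateEquiv g).symm u, (translateEquiv g).symm v) ∈ switchedPath g := by
  have h2 := obHalf_add_obHalf hn
  rcases u with _ | ⟨i, x⟩ <;> rcases v with _ | ⟨j, y⟩ <;> try exact hb.elim
  have hy : y = x ∨ y = x + obHalf n := by
    rcases hb with hb | hb
    · exact .inl (by linear_combination -hb)
    · exact .inr (by linear_combination -hb - h2)
  simp only [translateEquiv_symm_some]
  -- `{(0,x),(1,x)}` lies in `P + g` and in `P* + g` exactly when `g = x + n/2`. An edge of
  -- difference `n/2` lies in `P + g` (both ends on one side) or in `P* + g` (ends on different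
  -- sides) exactly when `g ∈ {x, x + n/2}`, and exactly one of these `g` lies in the right half.
  rcases hy with hy | hy <;> subst y <;> rcases i <;> rcases j
  case inl.false.false | inl.true.true => exact absurd rfl huv
  case' inl.false.true | inl.true.false =>
    refine (existsUnique_congr fun g => ?_).mpr (existsUnique_eq (a' := x + obHalf n))
  case' inr.false.false | inr.true.true =>
    refine (existsUnique_congr fun g => ?_).mpr (existsUnique_isFirstHalf_iff hn hpos True x)
  case' inr.false.true | inr.true.false =>
    refine (existsUnique_congr fun g => ?_).mpr (existsUnique_isFirstHalf_iff hn hpos False x)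
  all_goals
    simp only [switchedPath]
    split_ifs with hg <;> simp [pathP, pathPstar, hg] <;> grind

section
variable {F : SimpleGraph (Option (Bool × ZMod n))}

lemma pathP_subset_edgeSet
    (hP : F.Adj (some (false, 0)) (some (false, obHalf n)) ∧
      F.Adj (some (false, obHalf n)) (some (true, obHalf n)) ∧
      F.Adj (some (true, obHalf n)) (some (true, 0))) :
    pathP n ⊆ F.edgeSet := by
  rintro e (rfl | rfl | rfl)
  exacts [hP.1, hP.2.1, hP.2.2]

lemma ncard_pathP (h0 : obHalf n ≠ 0) : (pathP n).ncard = 3 := by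
  rw [pathP, Set.ncard_insert_of_notMem, Set.ncard_pair] <;> simp [h0, h0.symm]

lemma deleteEdges_pathP_adj_none (w : Option (Bool × ZMod n)) :
    (F.deleteEdges (pathP n)).Adj none w ↔ F.Adj none w := by
  simp [pathP]

lemma card_adj_some_deleteEdges_pathP [NeZero n] [DecidableRel (F.deleteEdges (pathP n)).Adj]
    (hreg : ∀ v, (F.neighborSet v).ncard = 2)
    (hP : F.Adj (some (false, 0)) (some (false, obHalf n)) ∧
      F.Adj (some (false, obHalf n)) (some (true, obHalf n)) ∧
      F.Adj (some (true, obHalf n)) (some (true, 0))) :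
    #{x : (Bool × ZMod n) × (Bool × ZMod n) |
      (F.deleteEdges (pathP n)).Adj (some x.1) (some x.2)} = 4 * (n - 2) := by
  classical
  have h0 : obHalf n ≠ 0 := fun h => hP.1.ne (by rw [h])
  have hF : 2 * #F.edgeFinset = 2 * (2 * n + 1) := by
    rw [← sum_degrees_eq_twice_card_edges]
    simp [degree_eq_ncard_neighborSet, hreg, ZMod.card]
    ring
  have hG : #(F.deleteEdges (pathP n)).edgeFinset = #F.edgeFinset - 3 := by
    rw [← Set.ncard_coe_finset, ← Set.ncard_coe_finset, coe_edgeFinset, coe_edgeFinset,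
      edgeSet_deleteEdges, Set.ncard_sdiff (pathP_subset_edgeSet hP), ncard_pathP h0]
  have hnone : (F.deleteEdges (pathP n)).degree none = 2 := by
    rw [degree_eq_ncard_neighborSet, ← hreg none]
    congr 1
    ext w
    exact deleteEdges_pathP_adj_none w
  have := card_adj_some_add_two_mul_degree_none (F.deleteEdges (pathP n))
  omega

lemma nonempty_iso_Fswitch (hreg : ∀ v, (F.neighborSet v).ncard = 2)
    (hP : F.Adj (some (false, 0)) (some (false, obHalf n)) ∧
      F.Adj (some (false, obHalf n)) (some (true, obHalf n)) ∧
      F.Adj (some (true, obHalf n)) (some (true, 0))) :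
    Nonempty (Fswitch F ≃g F) := by
  have h0 : obHalf n ≠ 0 := fun h => hP.1.ne (by rw [h])
  have hA := not_adj_deleteEdges_of_neighborSet (s := pathP n) (hreg _) hP.1.symm hP.2.1
    (by simp [h0.symm]) (by simp [pathP]) (by simp [pathP])
  have hB := not_adj_deleteEdges_of_neighborSet (s := pathP n) (hreg _) hP.2.1.symm hP.2.2
    (by simp) (by simp [pathP]) (by simp [pathP])
  let σ := Equiv.swap (some (false, obHalf n)) (some (true, obHalf n))
  have himg : Sym2.map σ '' pathPstar n = pathP n := by
    simp [σ, pathPstar, pathP, Set.image_insert_eq, Equiv.swap_apply_of_ne_of_ne, h0.symm]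
  have e := Iso.supFromEdgeSetImage _ σ (adj_swap_iff_of_isolated hA hB) (pathPstar n)
  rw [himg, deleteEdges_sup_fromEdgeSet_of_subset (pathP_subset_edgeSet hP)] at e
  exact ⟨e⟩

end

section
variable (G : SimpleGraph (Option (Bool × ZMod n)))

def diffSet (i j : Bool) : Set (ZMod n) :=
  {d | ∃ a b : ZMod n, G.Adj (some (i, a)) (some (j, b)) ∧ a - b = d}

lemma neg_mem_diffSet_iff {i j : Bool} {d : ZMod n} :
    -d ∈ diffSet G i j ↔ d ∈ diffSet G j i := by
  constructor
  · rintro ⟨a, b, h, hab⟩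
    exact ⟨b, a, h.symm, by linear_combination -hab⟩
  · rintro ⟨a, b, h, rfl⟩
    exact ⟨b, a, h.symm, by ring⟩

lemma forall_diffSet_eq (hn : Even n)
    (h00 : diffSet G false false = {d | d ≠ 0 ∧ d ≠ obHalf n})
    (h01 : diffSet G false true = {d | d ≠ 0 ∧ d ≠ obHalf n})
    (h11 : diffSet G true true = {d | d ≠ 0 ∧ d ≠ obHalf n}) :
    ∀ i j, diffSet G i j = {d | d ≠ 0 ∧ d ≠ obHalf n} := by
  rintro (_ | _) (_ | _)
  · exact h00
  · exact h01
  · ext d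
    rw [← neg_mem_diffSet_iff, h01]
    simp [neg_eq_iff_eq_neg, neg_obHalf hn]
  · exact h11

lemma eq_of_adj_of_sub_eq [NeZero n] [DecidableRel G.Adj] (h0 : obHalf n ≠ 0)
    (hΔ : ∀ i j, diffSet G i j = {d | d ≠ 0 ∧ d ≠ obHalf n})
    (hcard : #{x : (Bool × ZMod n) × (Bool × ZMod n) | G.Adj (some x.1) (some x.2)} = 4 * (n - 2))
    {i j : Bool} {a b a' b' : ZMod n} (h : G.Adj (some (i, a)) (some (j, b)))
    (h' : G.Adj (some (i, a')) (some (j, b'))) (hd : a - b = a' - b') : a = a' := by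
  set D := ({x | G.Adj (some x.1) (some x.2)} : Finset ((Bool × ZMod n) × (Bool × ZMod n)))
  let φ : (Bool × ZMod n) × (Bool × ZMod n) → (Bool × Bool) × ZMod n :=
    fun x => ((x.1.1, x.2.1), x.1.2 - x.2.2)
  have himage : D.image φ = univ ×ˢ {0, obHalf n}ᶜ := by
    ext ⟨⟨i, j⟩, d⟩
    have hd : d ∈ diffSet G i j ↔ d ≠ 0 ∧ d ≠ obHalf n := by rw [hΔ]; rfl
    simp only [mem_image, mem_product, mem_univ, mem_compl, mem_insert, mem_singleton, not_or,
      true_and, ← hd]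
    constructor
    · rintro ⟨⟨⟨i', a⟩, ⟨j', b⟩⟩, hx, hφ⟩
      simp only [φ, Prod.mk.injEq] at hφ
      obtain ⟨⟨rfl, rfl⟩, rfl⟩ := hφ
      exact ⟨a, b, by simpa [D] using hx, rfl⟩
    · rintro ⟨a, b, hab, rfl⟩
      exact ⟨((i, a), (j, b)), by simpa [D] using hab, rfl⟩
  have hinj : Set.InjOn φ D := by
    refine card_image_iff.mp ?_
    rw [himage, card_product, card_compl, card_pair h0.symm, hcard]
    simp [ZMod.card]
  have := hinj (x₁ := ((i, a), (j, b))) (x₂ := ((i, a'), (j, b'))) (by simpa [D] using h)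
    (by simpa [D] using h') (by simp [φ, hd])
  simp only [Prod.mk.injEq] at this
  exact this.1.2

lemma not_sameBlock_of_adj (hΔ : ∀ i j, diffSet G i j = {d | d ≠ 0 ∧ d ≠ obHalf n})
    {u v : Option (Bool × ZMod n)} (h : G.Adj u v) : ¬SameBlock u v := by
  rcases u with _ | ⟨i, x⟩ <;> rcases v with _ | ⟨j, y⟩ <;>
    simp only [SameBlock, not_false_eq_true]
  have : x - y ∈ diffSet G i j := ⟨x, y, h, rfl⟩
  rw [hΔ] at this
  exact not_or.mpr this

lemma existsUnique_adj_none_translate {x₀ x₁ : ZMod n}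
    (hnone : ∀ w, G.Adj none w ↔ w = some (false, x₀) ∨ w = some (true, x₁))
    (j : Bool) (y : ZMod n) :
    ∃! g, G.Adj none (some (j, y - g)) := by
  cases j
  · refine (existsUnique_congr fun g => ?_).mpr (existsUnique_eq (a' := y - x₀))
    simp [hnone, sub_eq_iff_comm, eq_comm (a := g)]
  · refine (existsUnique_congr fun g => ?_).mpr (existsUnique_eq (a' := y - x₁))
    simp [hnone, sub_eq_iff_comm, eq_comm (a := g)]

lemma existsUnique_adj_translate_of_not_sameBlock {x₀ x₁ : ZMod n}
    (hnone : ∀ w, G.Adj none w ↔ w = some (false, x₀) ∨ w = some (true, x₁))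
    (hΔ : ∀ i j, diffSet G i j = {d | d ≠ 0 ∧ d ≠ obHalf n})
    (hinj : ∀ {i j a b a' b'}, G.Adj (some (i, a)) (some (j, b)) →
      G.Adj (some (i, a')) (some (j, b')) → a - b = a' - b' → a = a')
    {u v : Option (Bool × ZMod n)} (huv : u ≠ v) (hb : ¬SameBlock u v) :
    ∃! g, G.Adj ((translateEquiv g).symm u) ((translateEquiv g).symm v) := by
  rcases u with _ | ⟨i, x⟩ <;> rcases v with _ | ⟨j, y⟩
  · exact absurd rfl huv
  · simpa using existsUnique_adj_none_translate G hnone j y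
  · simpa [G.adj_comm _ none] using existsUnique_adj_none_translate G hnone i x
  obtain ⟨a, b, hab, hd⟩ : x - y ∈ diffSet G i j := by
    rw [hΔ]; exact not_or.mp hb
  refine ⟨x - a, ?_, fun g hg => ?_⟩
  · simpa [show y - (x - a) = b by linear_combination hd] using hab
  · simp only [translateEquiv_symm_some] at hg
    linear_combination -(hinj hg hab (by linear_combination -hd))

lemma existsUnique_adj_translate_sup_switchedPath (hn : Even n) (hpos : 0 < n)
    (h0 : obHalf n ≠ 0)
    (hgen : ∀ u v, u ≠ v → ¬SameBlock u v →
      ∃! g, G.Adj ((translateEquiv g).symm u) ((translateEquiv g).symm v))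
    (hblock : ∀ u v, G.Adj u v → ¬SameBlock u v) {u v : Option (Bool × ZMod n)} (huv : u ≠ v) :
    ∃! g, (obTranslate2 (G ⊔ fromEdgeSet (switchedPath g)) g).Adj u v := by
  have hM : ∀ g, (obTranslate2 (G ⊔ fromEdgeSet (switchedPath g)) g).Adj u v ↔
      G.Adj ((translateEquiv g).symm u) ((translateEquiv g).symm v) ∨
        s((translateEquiv g).symm u, (translateEquiv g).symm v) ∈ switchedPath g := fun g => by
    simp [obTranslate2_adj, (translateEquiv g).symm.injective.ne huv]
  rw [existsUnique_congr hM]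
  by_cases hb : SameBlock u v
  · have hG : ∀ g, ¬G.Adj ((translateEquiv g).symm u) ((translateEquiv g).symm v) :=
      fun g h => hblock _ _ h ((sameBlock_translate_iff g u v).mpr hb)
    simpa [hG] using existsUnique_mem_switchedPath hn hpos h0 huv hb
  · have hQ : ∀ g, s((translateEquiv g).symm u, (translateEquiv g).symm v) ∉ switchedPath g :=
      fun g h => hb ((sameBlock_translate_iff g u v).mp (sameBlock_of_mem_switchedPath hn h))
    simpa [hQ] using hgen u v huv hb

end

theorem stmt12_general (n : ℕ) (hn : Even n)
    (F : SimpleGraph (Option (Bool × ZMod n)))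
    (hreg : ∀ v, (F.neighborSet v).ncard = 2)
    (x₀ x₁ : ZMod n)
    (hinf : ∀ v, F.Adj none v ↔ v = some (false, x₀) ∨ v = some (true, x₁))
    -- `F` contains the path `P` (within one of its cycles)
    (hP : F.Adj (some (false, 0)) (some (false, obHalf n)) ∧
          F.Adj (some (false, obHalf n)) (some (true, obHalf n)) ∧
          F.Adj (some (true, obHalf n)) (some (true, 0)))
    -- `Δ_{ij}(F − P) = Z_n \ {0, n/2}` for each (i,j) ∈ {(0,0),(0,1),(1,1)}
    (h00 : {d : ZMod n | ∃ a b : ZMod n,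
      (F.deleteEdges (pathP n)).Adj (some (false, a)) (some (false, b)) ∧ a - b = d}
        = {d : ZMod n | d ≠ 0 ∧ d ≠ obHalf n})
    (h01 : {d : ZMod n | ∃ a b : ZMod n,
      (F.deleteEdges (pathP n)).Adj (some (false, a)) (some (true, b)) ∧ a - b = d}
        = {d : ZMod n | d ≠ 0 ∧ d ≠ obHalf n})
    (h11 : {d : ZMod n | ∃ a b : ZMod n,
      (F.deleteEdges (pathP n)).Adj (some (true, a)) (some (true, b)) ∧ a - b = d}
        = {d : ZMod n | d ≠ 0 ∧ d ≠ obHalf n}) :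
    -- `F*` is isomorphic to `F`, and
    Nonempty (Fswitch F ≃g F) ∧
    -- `{F + g : 1 ≤ g ≤ n/2} ∪ {F* + (n/2 + g) : 1 ≤ g ≤ n/2}` decomposes `K_{2n+1}`:
    -- every edge lies in exactly one member of the family
    (∀ u v : Option (Bool × ZMod n), u ≠ v →
      ∃! p : ℕ × Bool, (1 ≤ p.1 ∧ p.1 ≤ n / 2) ∧
        (cond p.2 (obTranslate2 F (p.1 : ZMod n))
          (obTranslate2 (Fswitch F) ((n / 2 + p.1 : ℕ) : ZMod n))).Adj u v) := by
  classical
  have h0 : obHalf n ≠ 0 := fun h => hP.1.ne (by rw [h])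
  have hpos : 0 < n := Nat.pos_of_ne_zero fun h => h0 (by subst h; rfl)
  have : NeZero n := ⟨hpos.ne'⟩
  set G := F.deleteEdges (pathP n)
  have hF : G ⊔ fromEdgeSet (pathP n) = F :=
    deleteEdges_sup_fromEdgeSet_of_subset (pathP_subset_edgeSet hP)
  have hnone : ∀ w, G.Adj none w ↔ w = some (false, x₀) ∨ w = some (true, x₁) :=
    fun w => (deleteEdges_pathP_adj_none w).trans (hinf w)
  have hΔ := forall_diffSet_eq G hn h00 h01 h11
  have hcard := card_adj_some_deleteEdges_pathP hreg hP
  refine ⟨nonempty_iso_Fswitch hreg hP,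
    fun u v huv => existsUnique_shiftOfIndex hn hpos (fun H : SimpleGraph _ => H.Adj u v) ?_⟩
  refine (existsUnique_congr fun g => ?_).mpr
    (existsUnique_adj_translate_sup_switchedPath G hn hpos h0
      (fun _ _ => existsUnique_adj_translate_of_not_sameBlock G hnone hΔ
        (eq_of_adj_of_sub_eq G h0 hΔ hcard))
      (fun _ _ => not_sameBlock_of_adj G hΔ) huv)
  by_cases hg : IsFirstHalf g <;> simp [switchedPath, hg, hF, Fswitch, G]

theorem stmt12 (n : ℕ) (hn : Even n) (hpos : 0 < n)
    (F : SimpleGraph (Option (Bool × ZMod n)))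
    (hreg : ∀ v, (F.neighborSet v).ncard = 2)
    (x₀ x₁ : ZMod n)
    (hinf : ∀ v, F.Adj none v ↔ v = some (false, x₀) ∨ v = some (true, x₁))
    -- `F` contains the path `P` (within one of its cycles)
    (hP : F.Adj (some (false, 0)) (some (false, obHalf n)) ∧
          F.Adj (some (false, obHalf n)) (some (true, obHalf n)) ∧
          F.Adj (some (true, obHalf n)) (some (true, 0)))
    -- `Δ_{ij}(F − P) = Z_n \ {0, n/2}` for each (i,j) ∈ {(0,0),(0,1),(1,1)}
    (h00 : {d : ZMod n | ∃ a b : ZMod n,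
      (F.deleteEdges (pathP n)).Adj (some (false, a)) (some (false, b)) ∧ a - b = d}
        = {d : ZMod n | d ≠ 0 ∧ d ≠ obHalf n})
    (h01 : {d : ZMod n | ∃ a b : ZMod n,
      (F.deleteEdges (pathP n)).Adj (some (false, a)) (some (true, b)) ∧ a - b = d}
        = {d : ZMod n | d ≠ 0 ∧ d ≠ obHalf n})
    (h11 : {d : ZMod n | ∃ a b : ZMod n,
      (F.deleteEdges (pathP n)).Adj (some (true, a)) (some (true, b)) ∧ a - b = d}
        = {d : ZMod n | d ≠ 0 ∧ d ≠ obHalf n}) :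
    -- `F*` is isomorphic to `F`, and
    Nonempty (Fswitch F ≃g F) ∧
    -- `{F + g : 1 ≤ g ≤ n/2} ∪ {F* + (n/2 + g) : 1 ≤ g ≤ n/2}` decomposes `K_{2n+1}`:
    -- every edge lies in exactly one member of the family
    (∀ u v : Option (Bool × ZMod n), u ≠ v →
      ∃! p : ℕ × Bool, (1 ≤ p.1 ∧ p.1 ≤ n / 2) ∧
        (cond p.2 (obTranslate2 F (p.1 : ZMod n))
          (obTranslate2 (Fswitch F) ((n / 2 + p.1 : ℕ) : ZMod n))).Adj u v) :=
  stmt12_general n hn F hreg x₀ x₁ hinf hP h00 h01 h11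
end

section
/- A graph admits a 2-factorization (a partition of its edge set into spanning 2-regular subgraphs) if and only if it is regular of even degree. -/
/-!
Orient the `2k`-regular graph so that every vertex has in- and out-degree `k`: giving every vertex
`k` slots, Hall's theorem assigns each edge its own slot at one of its endpoints (its tail), because
`m` edges always touch vertices of total degree at least `2m`. The arcs form a relation on `V` with all row and
column sums `k`, which Hall's theorem again splits into `k` permutations `σᵢ`. As the arcs form an
orientation, no `σᵢ` has fixed points or `2`-cycles, so the edges `u — σᵢ u` form a `2`-factor.
Conversely, the neighbourhood of a vertex is the disjoint union of its `k` neighbourhoods of size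
`2` in the factors.
-/

open Finset

section PermDecomposition

variable {V : Type*} [Fintype V] [DecidableEq V] {D : Finset (V × V)}

theorem exists_perm_forall_mem_of_card_eq {k : ℕ} (hk : 0 < k)
    (hout : ∀ u, #{v | (u, v) ∈ D} = k) (hin : ∀ v, #{u | (u, v) ∈ D} = k) :
    ∃ σ : Equiv.Perm V, ∀ u, (u, σ u) ∈ D := by
  have hall : ∀ A : Finset V, #A ≤ #{v | ∃ u ∈ A, (u, v) ∈ D} := by
    intro A
    refine Nat.le_of_mul_le_mul_right (card_mul_le_card_mul (fun u v ↦ (u, v) ∈ D)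
      (fun u hu ↦ ?_) fun v _ ↦ ?_) hk
    · rw [← hout u]
      refine card_le_card fun v hv ↦ ?_
      have hv := (mem_filter.1 hv).2
      exact mem_filter.2 ⟨mem_filter.2 ⟨mem_univ v, u, hu, hv⟩, hv⟩
    · exact (hin v).symm ▸ card_le_card (filter_subset_filter _ (subset_univ A))
  obtain ⟨f, hf, hfD⟩ :=
    (Fintype.all_card_le_filter_rel_iff_exists_injective fun u v ↦ (u, v) ∈ D).1 hall
  exact ⟨Equiv.ofBijective f hf.bijective_of_finite, hfD⟩

theorem exists_perm_decomposition_of_card_eq {k : ℕ}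
    (hout : ∀ u, #{v | (u, v) ∈ D} = k) (hin : ∀ v, #{u | (u, v) ∈ D} = k) :
    ∃ σ : Fin k → Equiv.Perm V,
      (∀ u v, (u, v) ∈ D ↔ ∃ i, σ i u = v) ∧ ∀ u, Function.Injective fun i ↦ σ i u := by
  induction k generalizing D with
  | zero =>
    refine ⟨finZeroElim, fun u v ↦ ?_, fun u ↦ Function.injective_of_subsingleton _⟩
    have := filter_eq_empty_iff.1 (card_eq_zero.1 (hout u)) (mem_univ v)
    simpa using this
  | succ k ih =>
    obtain ⟨σ, hσ⟩ := exists_perm_forall_mem_of_card_eq k.succ_pos hout hin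
    let D' : Finset (V × V) := {p ∈ D | σ p.1 ≠ p.2}
    have hout' : ∀ u, #{v | (u, v) ∈ D'} = k := fun u ↦ by
      have : ({v | (u, v) ∈ D'} : Finset V) = ({v | (u, v) ∈ D} : Finset V).erase (σ u) := by
        ext v
        simp [D', and_comm, eq_comm]
      rw [this, card_erase_of_mem (by simpa using hσ u), hout u, Nat.add_sub_cancel]
    have hin' : ∀ v, #{u | (u, v) ∈ D'} = k := fun v ↦ by
      have : ({u | (u, v) ∈ D'} : Finset V) =
          ({u | (u, v) ∈ D} : Finset V).erase (σ.symm v) := by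
        ext u
        simp [D', and_comm, ← Equiv.eq_symm_apply]
      rw [this, card_erase_of_mem (by simpa using hσ (σ.symm v)), hin v, Nat.add_sub_cancel]
    obtain ⟨τ, hτD, hτinj⟩ := ih hout' hin'
    refine ⟨Fin.cons σ τ, fun u v ↦ ?_, fun u ↦ ?_⟩
    · rw [Fin.exists_fin_succ]
      simp only [Fin.cons_zero, Fin.cons_succ, ← hτD, D', mem_filter]
      constructor
      · intro h
        by_cases hv : σ u = v
        exacts [Or.inl hv, Or.inr ⟨h, hv⟩]
      · rintro (rfl | ⟨h, -⟩)
        exacts [hσ u, h]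
    · have : (fun i ↦ (Fin.cons σ τ : Fin (k + 1) → Equiv.Perm V) i u) =
          Fin.cons (σ u) fun i ↦ τ i u := by
        ext i
        cases i using Fin.cases <;> rfl
      rw [this, Fin.cons_injective_iff]
      refine ⟨?_, hτinj u⟩
      rintro ⟨i, hi⟩
      exact (mem_filter.1 ((hτD u _).2 ⟨i, rfl⟩)).2 hi.symm

end PermDecomposition

namespace SimpleGraph

variable {V : Type*}

/-- `D` holds exactly one of `(u, v)`, `(v, u)` for each edge `uv` of `G`, and nothing else. -/
def IsOrientation (G : SimpleGraph V) (D : Finset (V × V)) : Prop :=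
  ∀ u v, (u, v) ∈ D ↔ G.Adj u v ∧ (v, u) ∉ D

namespace IsOrientation

variable {G : SimpleGraph V} {D : Finset (V × V)}

theorem adj (hD : G.IsOrientation D) {u v : V} (h : (u, v) ∈ D) : G.Adj u v :=
  ((hD u v).1 h).1

theorem notMem_swap (hD : G.IsOrientation D) {u v : V} (h : (u, v) ∈ D) : (v, u) ∉ D :=
  ((hD u v).1 h).2

theorem mem_or_mem_swap (hD : G.IsOrientation D) {u v : V} (h : G.Adj u v) :
    (u, v) ∈ D ∨ (v, u) ∈ D :=
  or_iff_not_imp_right.2 fun h' ↦ (hD u v).2 ⟨h, h'⟩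

variable [Fintype V] [DecidableEq V] [DecidableRel G.Adj]

theorem card_out_add_card_in (hD : G.IsOrientation D) (u : V) :
    #{v | (u, v) ∈ D} + #{v | (v, u) ∈ D} = G.degree u := by
  rw [← card_neighborFinset_eq_degree, ← card_union_of_disjoint]
  · congr 1
    ext v
    simp only [mem_neighborFinset, mem_union, mem_filter, mem_univ, true_and]
    exact ⟨fun h ↦ h.elim hD.adj fun h ↦ (hD.adj h).symm, fun h ↦ hD.mem_or_mem_swap h⟩
  · exact disjoint_filter.2 fun v _ h ↦ hD.notMem_swap h

/-- Since in- and out-degrees have the same sum, an orientation whose out-degrees are at most half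
the degrees must split every degree evenly. -/
theorem card_out_eq_half (hD : G.IsOrientation D) (hle : ∀ u, #{v | (u, v) ∈ D} ≤ G.degree u / 2)
    (u : V) : #{v | (u, v) ∈ D} = G.degree u / 2 ∧ #{v | (v, u) ∈ D} = G.degree u / 2 := by
  have hsum : ∑ u, #{v | (u, v) ∈ D} = ∑ u, #{v | (v, u) ∈ D} :=
    sum_card_bipartiteAbove_eq_sum_card_bipartiteBelow (fun u v ↦ (u, v) ∈ D)
  have hout_le_in : ∀ u ∈ univ, #{v | (u, v) ∈ D} ≤ #{v | (v, u) ∈ D} := fun u _ ↦ by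
    have := hD.card_out_add_card_in u
    have := hle u
    omega
  have := (sum_eq_sum_iff_of_le hout_le_in).1 hsum u (mem_univ u)
  have := hD.card_out_add_card_in u
  omega

end IsOrientation

section EvenDegree

variable [Fintype V] [DecidableEq V] (G : SimpleGraph V) [DecidableRel G.Adj]

theorem two_mul_card_le_sum_degree (A : Finset G.edgeSet) {W : Finset V}
    (hW : ∀ e ∈ A, ∀ v ∈ (e : Sym2 V), v ∈ W) : 2 * #A ≤ ∑ v ∈ W, G.degree v := by
  let r : G.edgeSet → V → Prop := fun e v ↦ v ∈ (e : Sym2 V)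
  calc 2 * #A = ∑ e ∈ A, #(W.bipartiteAbove r e) := by
        rw [mul_comm, ← smul_eq_mul, ← sum_const]
        refine sum_congr rfl fun e he ↦ ?_
        have : W.bipartiteAbove r e = (e : Sym2 V).toFinset := by
          ext v
          simpa [bipartiteAbove, r] using fun h ↦ hW e he v h
        rw [this, Sym2.card_toFinset_of_not_isDiag _ (G.not_isDiag_of_mem_edgeSet e.2)]
    _ = ∑ v ∈ W, #(A.bipartiteBelow r v) := sum_card_bipartiteAbove_eq_sum_card_bipartiteBelow r
    _ ≤ ∑ v ∈ W, G.degree v := sum_le_sum fun v _ ↦ by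
        rw [← card_incidenceFinset_eq_degree]
        refine card_le_card_of_injOn Subtype.val (fun e he ↦ ?_) Subtype.val_injective.injOn
        exact (G.mem_incidenceFinset v _).2 ⟨e.2, (mem_filter.1 he).2⟩

theorem exists_tail_card_le (heven : ∀ v, Even (G.degree v)) :
    ∃ τ : G.edgeSet → V, (∀ e : G.edgeSet, τ e ∈ (e : Sym2 V)) ∧
      ∀ v, #{e : G.edgeSet | τ e = v} ≤ G.degree v / 2 := by
  let Slot := Σ v : V, Fin (G.degree v / 2)
  have hall : ∀ A : Finset G.edgeSet, #A ≤ #{s : Slot | ∃ e ∈ A, s.1 ∈ (e : Sym2 V)} := by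
    intro A
    let W : Finset V := {v | ∃ e ∈ A, v ∈ (e : Sym2 V)}
    have hslots : ({s : Slot | ∃ e ∈ A, s.1 ∈ (e : Sym2 V)} : Finset Slot) =
        W.sigma fun _ ↦ univ := by
      ext s
      rw [Finset.mem_sigma]
      simp [W]
    have h2 := G.two_mul_card_le_sum_degree A (W := W) fun e he v hv ↦
      mem_filter.2 ⟨mem_univ _, e, he, hv⟩
    rw [hslots, card_sigma]
    simp only [card_univ, Fintype.card_fin]
    rw [← sum_congr rfl fun v _ ↦ Nat.two_mul_div_two_of_even (heven v), ← mul_sum] at h2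
    omega
  obtain ⟨f, hf, hfmem⟩ :=
    (Fintype.all_card_le_filter_rel_iff_exists_injective
      (fun (e : G.edgeSet) (s : Slot) ↦ s.1 ∈ (e : Sym2 V))).1 hall
  refine ⟨fun e ↦ (f e).1, hfmem, fun v ↦ ?_⟩
  calc #{e | (f e).1 = v} ≤ #{s : Slot | s.1 = v} :=
        card_le_card_of_injOn f (fun e he ↦ by simpa using he) hf.injOn
    _ = G.degree v / 2 := by
        rw [show ({s : Slot | s.1 = v} : Finset Slot) = ({v} : Finset V).sigma fun _ ↦ univ by
          ext s; rw [Finset.mem_sigma]; simp, card_sigma]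
        simp

theorem exists_isOrientation_card_eq_half (heven : ∀ v, Even (G.degree v)) :
    ∃ D : Finset (V × V), G.IsOrientation D ∧
      ∀ u, #{v | (u, v) ∈ D} = G.degree u / 2 ∧ #{v | (v, u) ∈ D} = G.degree u / 2 := by
  classical
  obtain ⟨τ, hτ, hτcard⟩ := G.exists_tail_card_le heven
  let D : Finset (V × V) := {p | ∃ e : G.edgeSet, τ e = p.1 ∧ (e : Sym2 V) = s(p.1, p.2)}
  have hD : G.IsOrientation D := by
    intro u v
    simp only [D, mem_filter, mem_univ, true_and]
    constructor
    · rintro ⟨e, rfl, he⟩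
      have hadj : G.Adj (τ e) v := by rw [← mem_edgeSet, ← he]; exact e.2
      refine ⟨hadj, fun ⟨e', he'τ, he'⟩ ↦ hadj.ne ?_⟩
      rw [← he'τ, Subtype.ext (he'.trans (Sym2.eq_swap.trans he.symm))]
    · rintro ⟨hadj, hnot⟩
      let e : G.edgeSet := ⟨s(u, v), hadj⟩
      rcases Sym2.mem_iff.1 (hτ e) with h | h
      · exact ⟨e, h, rfl⟩
      · exact absurd ⟨e, h, Sym2.eq_swap⟩ hnot
  refine ⟨D, hD, hD.card_out_eq_half fun u ↦ le_trans ?_ (hτcard u)⟩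
  refine card_le_card_of_forall_subsingleton (fun v (e : G.edgeSet) ↦ (e : Sym2 V) = s(u, v))
    (fun v hv ↦ ?_) fun e _ v₁ hv₁ v₂ hv₂ ↦ Sym2.congr_right.1 (hv₁.2.symm.trans hv₂.2)
  simp only [D, mem_filter, mem_univ, true_and] at hv
  obtain ⟨e, he, hes⟩ := hv
  exact ⟨e, mem_filter.2 ⟨mem_univ _, he⟩, hes⟩

end EvenDegree

def IsTwoFactorization (G : SimpleGraph V) {k : ℕ} (Fs : Fin k → SimpleGraph V) : Prop :=
  (∀ i, Fs i ≤ G ∧ ∀ v, ((Fs i).neighborSet v).ncard = 2) ∧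
  (∀ i j, i ≠ j → ∀ u v, ¬ ((Fs i).Adj u v ∧ (Fs j).Adj u v)) ∧
  (∀ u v, G.Adj u v → ∃ i, (Fs i).Adj u v)

variable {G : SimpleGraph V} {k : ℕ}

theorem IsTwoFactorization.ncard_neighborSet [Finite V] {Fs : Fin k → SimpleGraph V}
    (hFs : G.IsTwoFactorization Fs) (v : V) : (G.neighborSet v).ncard = 2 * k := by
  obtain ⟨hfac, hdisj, hcov⟩ := hFs
  have hunion : G.neighborSet v = ⋃ i, (Fs i).neighborSet v := by
    ext w
    simp only [mem_neighborSet, Set.mem_iUnion]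
    exact ⟨hcov v w, fun ⟨i, hi⟩ ↦ (hfac i).1 hi⟩
  rw [hunion, Set.ncard_iUnion_of_finite (s := fun i ↦ (Fs i).neighborSet v)
    (fun _ ↦ Set.toFinite _)
    fun i j hij ↦ Set.disjoint_left.2 fun w hi hj ↦ hdisj i j hij v w ⟨hi, hj⟩]
  simp [fun i ↦ (hfac i).2 v, finsum_eq_sum_of_fintype, mul_comm]

theorem ncard_neighborSet_fromRel_perm {σ : Equiv.Perm V} (hσ : ∀ v, σ (σ v) ≠ v) (v : V) :
    ((fromRel fun u w ↦ σ u = w).neighborSet v).ncard = 2 := by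
  have hfix : σ v ≠ v := fun h ↦ hσ v (by rw [h, h])
  have hne : σ v ≠ σ.symm v := fun h ↦ hσ v (by rw [h, Equiv.apply_symm_apply])
  have : (fromRel fun u w ↦ σ u = w).neighborSet v = {σ v, σ.symm v} := by
    ext w
    simp only [mem_neighborSet, fromRel_adj, Set.mem_insert_iff, Set.mem_singleton_iff,
      Equiv.eq_symm_apply]
    constructor
    · rintro ⟨-, h | h⟩
      exacts [Or.inl h.symm, Or.inr h]
    · rintro (rfl | h)
      · exact ⟨hfix.symm, Or.inl rfl⟩
      · exact ⟨by rintro rfl; exact hfix h, Or.inr h⟩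
  rw [this, Set.ncard_pair hne]

theorem IsOrientation.isTwoFactorization_fromRel {D : Finset (V × V)} {σ : Fin k → Equiv.Perm V}
    (hD : G.IsOrientation D) (hσD : ∀ u v, (u, v) ∈ D ↔ ∃ i, σ i u = v)
    (hσinj : ∀ u, Function.Injective fun i ↦ σ i u) :
    G.IsTwoFactorization fun i ↦ fromRel fun u v ↦ σ i u = v := by
  have harc : ∀ i u, (u, σ i u) ∈ D := fun i u ↦ (hσD _ _).2 ⟨i, rfl⟩
  refine ⟨fun i ↦ ⟨?_, ncard_neighborSet_fromRel_perm fun v h ↦ ?_⟩, ?_, fun u v huv ↦ ?_⟩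
  · rintro u v ⟨-, rfl | rfl⟩
    exacts [hD.adj (harc i u), (hD.adj (harc i v)).symm]
  · have := harc i (σ i v)
    rw [h] at this
    exact hD.notMem_swap (harc i v) this
  · rintro i j hij u v ⟨⟨-, hi⟩, ⟨-, hj⟩⟩
    rcases hi with rfl | rfl <;> rcases hj with h | h
    · exact hij (hσinj u h.symm)
    · have := harc j (σ i u)
      rw [h] at this
      exact hD.notMem_swap (harc i u) this
    · have := harc j (σ i v)
      rw [h] at this
      exact hD.notMem_swap (harc i v) this
    · exact hij (hσinj v h.symm)
  · rcases hD.mem_or_mem_swap huv with h | h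
    · obtain ⟨i, hi⟩ := (hσD u v).1 h
      exact ⟨i, huv.ne, Or.inl hi⟩
    · obtain ⟨i, hi⟩ := (hσD v u).1 h
      exact ⟨i, huv.ne, Or.inr hi⟩

theorem exists_isTwoFactorization_of_degree_eq [Fintype V] [DecidableEq V] [DecidableRel G.Adj]
    (hG : ∀ v, G.degree v = 2 * k) : ∃ Fs : Fin k → SimpleGraph V, G.IsTwoFactorization Fs := by
  obtain ⟨D, hD, hDdeg⟩ := G.exists_isOrientation_card_eq_half fun v ↦ ⟨k, by rw [hG]; ring⟩
  have hk : ∀ v, G.degree v / 2 = k := fun v ↦ by rw [hG]; omega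
  obtain ⟨σ, hσD, hσinj⟩ := exists_perm_decomposition_of_card_eq (D := D)
    (fun u ↦ (hDdeg u).1.trans (hk u)) fun v ↦ (hDdeg v).2.trans (hk v)
  exact ⟨_, hD.isTwoFactorization_fromRel hσD hσinj⟩

end SimpleGraph

/-- Petersen's theorem: a finite graph admits a 2-factorization if and only if
it is regular of even degree. -/
theorem stmt16 {V : Type} [Fintype V] (G : SimpleGraph V) :
    (∃ (k : ℕ) (Fs : Fin k → SimpleGraph V),
      -- each factor is a spanning 2-regular subgraph of G
      (∀ i, Fs i ≤ G ∧ ∀ v, ((Fs i).neighborSet v).ncard = 2) ∧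
      -- the factors are pairwise edge-disjoint
      (∀ i j, i ≠ j → ∀ u v, ¬ ((Fs i).Adj u v ∧ (Fs j).Adj u v)) ∧
      -- and they cover every edge of G
      (∀ u v, G.Adj u v → ∃ i, (Fs i).Adj u v)) ↔
    (∃ k : ℕ, ∀ v, (G.neighborSet v).ncard = 2 * k) := by
  classical
  constructor
  · rintro ⟨k, Fs, hFs⟩
    exact ⟨k, SimpleGraph.IsTwoFactorization.ncard_neighborSet hFs⟩
  · rintro ⟨k, hk⟩
    refine ⟨k, SimpleGraph.exists_isTwoFactorization_of_degree_eq fun v ↦ ?_⟩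
    rw [← hk v, Set.ncard_eq_toFinset_card']
    rfl
end

section
/- Let n be odd and let F be a 2-regular graph on ({0,1} × Z_n) ∪ {∞} satisfying the 2-rotational conditions (neighbours of ∞ of forms (0,x_0),(1,x_1); Δ_{00}F = Δ_{11}F = Z_n\{0}; Δ_{01}F = Z_n). Suppose C is a cycle of F containing an edge {(0,y_0),(1,y_1)}. Let H be obtained from F by replacing this edge with the path (0,y_0), ∞′, (1,y_1), where ∞′ is a new vertex. Then I = {{∞,∞′}} ∪ {{(0,y_0)+g, (1,y_1)+g} : g ∈ Z_n} is a perfect matching of the complete graph on ({0,1}×Z_n) ∪ {∞,∞′}, and {H + g : g ∈ Z_n} is an edge-decomposition of K_{2n+2} − I. -/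
/-- Vertices of `K_{2n+2}`: `({0,1} × Z_n) ∪ {∞, ∞′}`, with `∞′ = none`, `∞ = some none`. -/
abbrev W2 (n : ℕ) : Type := Option (Option (Bool × ZMod n))

/-- Translation by `g` on `({0,1} × Z_n) ∪ {∞, ∞′}`, fixing `∞` and `∞′`. -/
def obTranslate2' {n : ℕ} (H : SimpleGraph (W2 n)) (g : ZMod n) : SimpleGraph (W2 n) :=
  H.map (Equiv.optionCongr (Equiv.optionCongr
    ((Equiv.refl Bool).prodCongr (Equiv.addRight g)))).toEmbedding

/-!
Row `i` of the 2-regular graph `F` carries `2n` ordered adjacent pairs, exactly one of which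
ends at `∞`, so there are `2n - 1` ordered pairs from row `i` to the rows `0` and `1`. The
differences of pairs inside a row cover the `n - 1` nonzero residues and those between the rows
cover all `n`, so these lower bounds are attained: every admissible difference `a - b` comes
from exactly one pair. An edge `{(i,a),(j,b)}` of `K_{2n+2}` therefore lies in `H + g` for
exactly one `g`, the one moving that pair onto it, unless the pair is the removed edge
`{(0,y₀),(1,y₁)}`, which happens exactly for the edges of `I`. Edges at `∞` and `∞′` are covered
once each, since each of them has one `H`-neighbour in every row.
-/

open Finset SimpleGraph

namespace SimpleGraph

variable {α : Type*} {G : SimpleGraph α} {u v : α}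

variable (G u v) in
def subdivide : SimpleGraph (Option α) :=
  (G.map some).deleteEdges {s(some u, some v)} ⊔ fromEdgeSet {s(none, some u), s(none, some v)}

@[simp] lemma subdivide_adj_none (w : α) :
    (G.subdivide u v).Adj none (some w) ↔ w = u ∨ w = v := by
  simp [subdivide, map_adj']

@[simp] lemma subdivide_adj_some (w z : α) :
    (G.subdivide u v).Adj (some w) (some z) ↔ G.Adj w z ∧ s(w, z) ≠ s(u, v) := by
  simp [subdivide, map_adj']
  grind [Adj.ne]

end SimpleGraph

section Differences

variable {A : Type*} [AddCommGroup A] (F : SimpleGraph (Option (Bool × A)))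

def differences (i j : Bool) : Set A :=
  {d | ∃ a b, F.Adj (some (i, a)) (some (j, b)) ∧ a - b = d}

variable {F}

lemma neg_mem_differences_iff {i j : Bool} {d : A} :
    -d ∈ differences F i j ↔ d ∈ differences F j i := by
  constructor
  · rintro ⟨a, b, hab, hd⟩
    exact ⟨b, a, hab.symm, by rw [← neg_sub, hd, neg_neg]⟩
  · rintro ⟨a, b, hab, rfl⟩
    exact ⟨b, a, hab.symm, (neg_sub a b).symm⟩

lemma differences_eq_of (h00 : differences F false false = {d | d ≠ 0})
    (h11 : differences F true true = {d | d ≠ 0}) (h01 : differences F false true = Set.univ)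
    (i j : Bool) : differences F i j = {d | i = j → d ≠ 0} := by
  cases i <;> cases j
  · simpa using h00
  · simpa using h01
  · ext d; simp [← neg_mem_differences_iff, h01]
  · simpa using h11

end Differences

section Counting

variable {A : Type*} [Fintype A] (F : SimpleGraph (Option (Bool × A))) [DecidableRel F.Adj]

def rowPairs (i j : Bool) : Finset (A × A) :=
  {p | F.Adj (some (i, p.1)) (some (j, p.2))}

variable {F}

lemma sum_degree_row (i : Bool) :
    ∑ a, F.degree (some (i, a)) =
      #{a | F.Adj (some (i, a)) none} + #(rowPairs F i false) + #(rowPairs F i true) := by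
  simp_rw [← card_neighborFinset_eq_degree, neighborFinset_eq_filter, card_filter, rowPairs,
    card_filter, Fintype.sum_option, Fintype.sum_prod_type, Fintype.sum_bool, sum_add_distrib]
  ring

lemma card_rowPairs_add (hreg : F.IsRegularOfDegree 2)
    (hinf : ∀ i, ∃! a, F.Adj (some (i, a)) none) (i : Bool) :
    #(rowPairs F i false) + #(rowPairs F i true) = 2 * Fintype.card A - 1 := by
  have := sum_degree_row (F := F) i
  simp only [hreg.degree_eq, sum_const, card_univ, smul_eq_mul,
    (Fintype.existsUnique_iff_card_one _).mp (hinf i)] at this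
  omega

variable [AddCommGroup A] [DecidableEq A]

lemma card_image_sub_rowPairs (hΔ : ∀ i j, differences F i j = {d | i = j → d ≠ 0})
    (i j : Bool) :
    #((rowPairs F i j).image fun p => p.1 - p.2) =
      if i = j then Fintype.card A - 1 else Fintype.card A := by
  have himage :
      (rowPairs F i j).image (fun p => p.1 - p.2) = ({d | i = j → d ≠ 0} : Finset A) := by
    rw [← coe_inj, coe_filter]
    ext d
    simp [← hΔ i j, differences, rowPairs]
  rw [himage]
  split_ifs with h <;> simp [h, filter_ne', card_erase_of_mem]

theorem injOn_sub_rowPairs (hreg : F.IsRegularOfDegree 2)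
    (hinf : ∀ i, ∃! a, F.Adj (some (i, a)) none)
    (hΔ : ∀ i j, differences F i j = {d | i = j → d ≠ 0}) (i j : Bool) :
    Set.InjOn (fun p => p.1 - p.2) (rowPairs F i j : Set (A × A)) := by
  refine card_image_iff.mp (le_antisymm card_image_le ?_)
  have hrow := card_rowPairs_add hreg hinf i
  have h0 := card_image_sub_rowPairs hΔ i false
  have h1 := card_image_sub_rowPairs hΔ i true
  have h0' : #((rowPairs F i false).image fun p => p.1 - p.2) ≤ #(rowPairs F i false) :=
    card_image_le
  have h1' : #((rowPairs F i true).image fun p => p.1 - p.2) ≤ #(rowPairs F i true) :=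
    card_image_le
  have := Fintype.card_pos (α := A)
  cases i <;> cases j <;> simp only [reduceCtorEq, ↓reduceIte] at * <;> omega

theorem existsUnique_adj_sub_eq (hreg : F.IsRegularOfDegree 2)
    (hinf : ∀ i, ∃! a, F.Adj (some (i, a)) none)
    (hΔ : ∀ i j, differences F i j = {d | i = j → d ≠ 0}) (i j : Bool) (d : A)
    (hd : i = j → d ≠ 0) :
    ∃! p : A × A, F.Adj (some (i, p.1)) (some (j, p.2)) ∧ p.1 - p.2 = d := by
  obtain ⟨a, b, hab, rfl⟩ : d ∈ differences F i j := by rw [hΔ]; exact hd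
  refine ⟨(a, b), ⟨hab, rfl⟩, fun q ⟨hq, hqd⟩ => injOn_sub_rowPairs hreg hinf hΔ i j ?_ ?_ hqd⟩
  · simpa [rowPairs] using hq
  · simpa [rowPairs] using hab

end Counting

section Translates

lemma existsUnique_sub_eq_or {A : Type*} [AddCommGroup A] (i : Bool) (a c₀ c₁ : A) :
    ∃! g : A, (i, a - g) = (false, c₀) ∨ (i, a - g) = (true, c₁) := by
  have key : ∀ c : A, ∃! g, a - g = c := fun c =>
    ⟨a - c, sub_sub_cancel a c, fun g h => by rw [← h, sub_sub_cancel]⟩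
  cases i <;> simpa using key _

variable {n : ℕ}

lemma existsUnique_obTranslate2'_adj_comm {H : SimpleGraph (W2 n)} {u v : W2 n} :
    (∃! g, (obTranslate2' H g).Adj u v) ↔ ∃! g, (obTranslate2' H g).Adj v u :=
  existsUnique_congr fun _ => adj_comm _ _ _

lemma obTranslate2'_adj (H : SimpleGraph (W2 n)) (g : ZMod n) (u v : W2 n) :
    (obTranslate2' H g).Adj u v ↔
      H.Adj (u.map (Option.map (Prod.map id (· - g))))
        (v.map (Option.map (Prod.map id (· - g)))) := by
  have hsymm : ∀ w : W2 n, (Equiv.optionCongr (Equiv.optionCongr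
      ((Equiv.refl Bool).prodCongr (Equiv.addRight g)))).symm w =
        w.map (Option.map (Prod.map id (· - g))) := by
    rintro (_ | _ | ⟨i, a⟩) <;> simp [← Equiv.optionCongr_symm, sub_eq_add_neg]
  rw [obTranslate2', ← comap_symm, comap_adj]
  simp [hsymm]

def oneFactor (y₀ y₁ : ZMod n) : SimpleGraph (W2 n) :=
  fromEdgeSet ({s((none : W2 n), some (none : Option (Bool × ZMod n)))} ∪
       {e | ∃ g : ZMod n,
          e = s((some (some (false, y₀ + g)) : W2 n), some (some (true, y₁ + g)))})

def matchPartner (y₀ y₁ : ZMod n) : W2 n → W2 n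
  | none => some none
  | some none => none
  | some (some (false, a)) => some (some (true, a - y₀ + y₁))
  | some (some (true, b)) => some (some (false, b - y₁ + y₀))

lemma oneFactor_adj (y₀ y₁ : ZMod n) (v w : W2 n) :
    (oneFactor y₀ y₁).Adj v w ↔ w = matchPartner y₀ y₁ v := by
  have key : ∀ c₀ c₁ a b : ZMod n, (∃ g, a = c₀ + g ∧ b = c₁ + g) ↔ b = a - c₀ + c₁ :=
    fun c₀ c₁ a b => ⟨fun ⟨g, ha, hb⟩ => by rw [ha, hb]; abel,
      fun h => ⟨a - c₀, by abel, by rw [h]; abel⟩⟩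
  rcases v with _ | _ | ⟨_ | _, a⟩ <;> rcases w with _ | _ | ⟨_ | _, b⟩ <;>
    simp [oneFactor, matchPartner, key]

variable (F : SimpleGraph (Option (Bool × ZMod n))) {y₀ y₁ : ZMod n}

lemma existsUnique_obTranslate2'_subdivide_adj_none (i : Bool) (a : ZMod n) :
    ∃! g, (obTranslate2' (F.subdivide (some (false, y₀)) (some (true, y₁))) g).Adj
      none (some (some (i, a))) := by
  simpa [obTranslate2'_adj] using existsUnique_sub_eq_or i a y₀ y₁

lemma existsUnique_obTranslate2'_subdivide_adj_some_none {x₀ x₁ : ZMod n}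
    (hinf : ∀ v, F.Adj none v ↔ v = some (false, x₀) ∨ v = some (true, x₁))
    (i : Bool) (a : ZMod n) :
    ∃! g, (obTranslate2' (F.subdivide (some (false, y₀)) (some (true, y₁))) g).Adj
      (some none) (some (some (i, a))) := by
  simpa [obTranslate2'_adj, hinf] using existsUnique_sub_eq_or i a x₀ x₁

lemma eq_matchPartner_of_sub_eq {i j : Bool} {a b g : ZMod n}
    (h : s(some (i, a - g), some (j, b - g)) = s(some (false, y₀), some (true, y₁))) :
    some (some (j, b)) = matchPartner y₀ y₁ (some (some (i, a))) := by
  rcases Sym2.eq_iff.mp h with ⟨h1, h2⟩ | ⟨h1, h2⟩ <;>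
    simp only [Option.some.injEq, Prod.mk.injEq] at h1 h2 <;>
    obtain ⟨rfl, ha⟩ := h1 <;> obtain ⟨rfl, hb⟩ := h2 <;>
    simp only [matchPartner, Option.some.injEq, Prod.mk.injEq, true_and] <;>
    linear_combination hb - ha

lemma existsUnique_obTranslate2'_subdivide_adj_some_some {i j : Bool} {a b : ZMod n}
    (hdiff : ∃! p : ZMod n × ZMod n, F.Adj (some (i, p.1)) (some (j, p.2)) ∧ p.1 - p.2 = a - b)
    (hI : some (some (j, b)) ≠ matchPartner y₀ y₁ (some (some (i, a)))) :
    ∃! g, (obTranslate2' (F.subdivide (some (false, y₀)) (some (true, y₁))) g).Adj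
      (some (some (i, a))) (some (some (j, b))) := by
  obtain ⟨p, ⟨hp, hpd⟩, hpu⟩ := hdiff
  simp only [obTranslate2'_adj, Option.map_some, Prod.map_apply, id_eq, subdivide_adj_some]
  refine ⟨a - p.1, ?_, fun g ⟨hg, _⟩ => ?_⟩
  · have hb : b - (a - p.1) = p.2 := by linear_combination hpd
    simp only [sub_sub_cancel, hb]
    refine ⟨hp, fun hrem => hI (eq_matchPartner_of_sub_eq (g := a - p.1) ?_)⟩
    rwa [sub_sub_cancel, hb]
  · have hg' := congrArg Prod.fst (hpu (a - g, b - g) ⟨hg, sub_sub_sub_cancel_right a b g⟩)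
    rw [← hg', sub_sub_cancel]

end Translates

theorem stmt18_general (n : ℕ) (hn : Odd n)
    (F : SimpleGraph (Option (Bool × ZMod n)))
    (hreg : ∀ v, (F.neighborSet v).ncard = 2)
    (x₀ x₁ : ZMod n)
    -- the neighbours of ∞ are (0, x₀) and (1, x₁)
    (hinf : ∀ v, F.Adj none v ↔ v = some (false, x₀) ∨ v = some (true, x₁))
    (h00 : {d : ZMod n | ∃ a b : ZMod n,
      F.Adj (some (false, a)) (some (false, b)) ∧ a - b = d} = {d : ZMod n | d ≠ 0})
    (h11 : {d : ZMod n | ∃ a b : ZMod n,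
      F.Adj (some (true, a)) (some (true, b)) ∧ a - b = d} = {d : ZMod n | d ≠ 0})
    (h01 : {d : ZMod n | ∃ a b : ZMod n,
      F.Adj (some (false, a)) (some (true, b)) ∧ a - b = d} = Set.univ)
    (y₀ y₁ : ZMod n)
    -- `H`: replace that edge by the path (0,y₀), ∞′, (1,y₁)
    (H : SimpleGraph (W2 n))
    (hH : H = ((F.map Function.Embedding.some).deleteEdges
        {s((some (some (false, y₀)) : W2 n), some (some (true, y₁)))}) ⊔
      SimpleGraph.fromEdgeSet
        {s((none : W2 n), some (some (false, y₀))),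
         s((none : W2 n), some (some (true, y₁)))})
    -- the 1-factor `I`
    (I : SimpleGraph (W2 n))
    (hI : I = SimpleGraph.fromEdgeSet
      ({s((none : W2 n), some (none : Option (Bool × ZMod n)))} ∪
       {e | ∃ g : ZMod n,
          e = s((some (some (false, y₀ + g)) : W2 n), some (some (true, y₁ + g)))})) :
    -- `I` is a perfect matching of `K_{2n+2}`
    (∀ v : W2 n, ∃! w : W2 n, I.Adj v w) ∧
    -- `{H + g : g ∈ Z_n}` is an edge-decomposition of `K_{2n+2} − I`
    (∀ u v : W2 n, u ≠ v → ¬ I.Adj u v →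
      ∃! g : ZMod n, (obTranslate2' H g).Adj u v) := by
  classical
  have : NeZero n := ⟨hn.pos.ne'⟩
  obtain rfl : H = F.subdivide (some (false, y₀)) (some (true, y₁)) := hH
  obtain rfl : I = oneFactor y₀ y₁ := hI
  have hdeg : F.IsRegularOfDegree 2 := fun v => by
    rw [← card_neighborSet_eq_degree, ← Nat.card_eq_fintype_card, Nat.card_coe_set_eq, hreg]
  have hinf_row : ∀ i, ∃! a, F.Adj (some (i, a)) none := by
    intro i; simp_rw [F.adj_comm _ none, hinf]; cases i <;> simp
  have hdiff := existsUnique_adj_sub_eq hdeg hinf_row (differences_eq_of h00 h11 h01)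
  simp only [oneFactor_adj, existsUnique_eq, implies_true, true_and]
  rintro (_ | _ | ⟨i, a⟩) (_ | _ | ⟨j, b⟩) huv hI
  · exact absurd rfl huv
  · exact absurd rfl hI
  · exact existsUnique_obTranslate2'_subdivide_adj_none F j b
  · exact absurd rfl hI
  · exact absurd rfl huv
  · exact existsUnique_obTranslate2'_subdivide_adj_some_none F hinf j b
  · exact existsUnique_obTranslate2'_adj_comm.2
      (existsUnique_obTranslate2'_subdivide_adj_none F i a)
  · exact existsUnique_obTranslate2'_adj_comm.2
      (existsUnique_obTranslate2'_subdivide_adj_some_none F hinf i a)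
  · refine existsUnique_obTranslate2'_subdivide_adj_some_some F (hdiff i j (a - b) ?_) hI
    rintro rfl hab
    exact huv (by rw [sub_eq_zero.mp hab])

theorem stmt18 (n : ℕ) (hn : Odd n)
    (F : SimpleGraph (Option (Bool × ZMod n)))
    (hreg : ∀ v, (F.neighborSet v).ncard = 2)
    (x₀ x₁ : ZMod n)
    -- the neighbours of ∞ are (0, x₀) and (1, x₁)
    (hinf : ∀ v, F.Adj none v ↔ v = some (false, x₀) ∨ v = some (true, x₁))
    (h00 : {d : ZMod n | ∃ a b : ZMod n,
      F.Adj (some (false, a)) (some (false, b)) ∧ a - b = d} = {d : ZMod n | d ≠ 0})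
    (h11 : {d : ZMod n | ∃ a b : ZMod n,
      F.Adj (some (true, a)) (some (true, b)) ∧ a - b = d} = {d : ZMod n | d ≠ 0})
    (h01 : {d : ZMod n | ∃ a b : ZMod n,
      F.Adj (some (false, a)) (some (true, b)) ∧ a - b = d} = Set.univ)
    -- a cycle of `F` contains the edge {(0,y₀),(1,y₁)}
    (y₀ y₁ : ZMod n) (hedge : F.Adj (some (false, y₀)) (some (true, y₁)))
    -- `H`: replace that edge by the path (0,y₀), ∞′, (1,y₁)
    (H : SimpleGraph (W2 n))
    (hH : H = ((F.map Function.Embedding.some).deleteEdges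
        {s((some (some (false, y₀)) : W2 n), some (some (true, y₁)))}) ⊔
      SimpleGraph.fromEdgeSet
        {s((none : W2 n), some (some (false, y₀))),
         s((none : W2 n), some (some (true, y₁)))})
    -- the 1-factor `I`
    (I : SimpleGraph (W2 n))
    (hI : I = SimpleGraph.fromEdgeSet
      ({s((none : W2 n), some (none : Option (Bool × ZMod n)))} ∪
       {e | ∃ g : ZMod n,
          e = s((some (some (false, y₀ + g)) : W2 n), some (some (true, y₁ + g)))})) :
    -- `I` is a perfect matching of `K_{2n+2}`
    (∀ v : W2 n, ∃! w : W2 n, I.Adj v w) ∧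
    -- `{H + g : g ∈ Z_n}` is an edge-decomposition of `K_{2n+2} − I`
    (∀ u v : W2 n, u ≠ v → ¬ I.Adj u v →
      ∃! g : ZMod n, (obTranslate2' H g).Adj u v) :=
  stmt18_general n hn F hreg x₀ x₁ hinf h00 h11 h01 y₀ y₁ H hH I hI
end
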